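/- arXiv:math/0303371 — 3 statements merged into one kernel-verified Lean document; each statement's English description precedes it below -/
import Mathlib

section
/- For a pseudo-Riemannian metric G on a manifold M, the gradient map is a homomorphism of symmetric algebras: for all smooth functions f, g on M, grad_G of the Beltrami bracket ⟨⟨f,g⟩⟩_G equals the symmetric product ⟨grad_G f : grad_G g⟩ of the gradients with respect to the Levi-Civita connection of G. -/
open scoped BigOperators
noncomputable section

/-- Points of the coordinate model of an `n`-manifold. -/
abbrev Pt (n : ℕ) : Type := Fin n → ℝ
/-- Vector fields in coordinates. -/
abbrev VF (n : ℕ) : Type := Pt n → Pt n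
/-- Christoffel symbols `Γ x a b c = Γ^a_{bc}(x)` of an affine connection. -/
abbrev Chr (n : ℕ) : Type := Pt n → Fin n → Fin n → Fin n → ℝ

/-- Partial derivative `∂f/∂x^b` at `x`. -/
def pd {n : ℕ} (f : Pt n → ℝ) (b : Fin n) (x : Pt n) : ℝ :=
  fderiv ℝ f x (Pi.single b 1)

/-- Lie derivative of a function along a vector field, `X f`. -/
def dirDer {n : ℕ} (X : VF n) (f : Pt n → ℝ) : Pt n → ℝ :=
  fun x => ∑ b, X x b * pd f b x

/-- Covariant derivative `∇_X Y` of the connection with Christoffel symbols `Γ`. -/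
def nabla {n : ℕ} (Γ : Chr n) (X Y : VF n) : VF n :=
  fun x a => (∑ b, X x b * pd (fun y => Y y a) b x) + ∑ b, ∑ c, Γ x a b c * X x b * Y x c

/-- Symmetric product `⟨X : Y⟩ = ∇_X Y + ∇_Y X`. -/
def symProd {n : ℕ} (Γ : Chr n) (X Y : VF n) : VF n :=
  fun x a => nabla Γ X Y x a + nabla Γ Y X x a

/-- Lie bracket `[X, Y]` in coordinates. -/
def lieBr {n : ℕ} (X Y : VF n) : VF n :=
  fun x a => (∑ b, X x b * pd (fun y => Y y a) b x) - ∑ b, Y x b * pd (fun y => X y a) b x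

/-- Smoothness of a vector field (componentwise). -/
def SmoothVF {n : ℕ} (X : VF n) : Prop := ∀ a, ContDiff ℝ (⊤ : ℕ∞) (fun x => X x a)

/-- Torsion-free connection: Christoffel symbols symmetric in the lower indices. -/
def TorsionFree {n : ℕ} (Γ : Chr n) : Prop := ∀ x a b c, Γ x a b c = Γ x a c b

/-- Smoothness of the Christoffel symbols. -/
def SmoothChr {n : ℕ} (Γ : Chr n) : Prop := ∀ a b c, ContDiff ℝ (⊤ : ℕ∞) (fun x => Γ x a b c)

/-- Gradient vector field of `f` w.r.t. a (pseudo-Riemannian) metric with inverse matrix `Ginv`. -/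
def gradV {n : ℕ} (Ginv : Pt n → Matrix (Fin n) (Fin n) ℝ) (f : Pt n → ℝ) : VF n :=
  fun x a => ∑ b, Ginv x a b * pd f b x

/-- Beltrami bracket `⟨⟨f,g⟩⟩_G = G(grad f, grad g)`. -/
def beltrami {n : ℕ} (Ginv : Pt n → Matrix (Fin n) (Fin n) ℝ) (f g : Pt n → ℝ) : Pt n → ℝ :=
  fun x => ∑ a, ∑ b, pd f a x * Ginv x a b * pd g b x

/-- Christoffel symbols of the Levi-Civita connection of `G`. -/
def leviCivita {n : ℕ} (G Ginv : Pt n → Matrix (Fin n) (Fin n) ℝ) : Chr n :=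
  fun x a b c => (1/2) * ∑ d, Ginv x a d *
    (pd (fun y => G y d b) c x + pd (fun y => G y d c) b x - pd (fun y => G y b c) d x)

/-- Smoothness of a matrix-valued function (entrywise). -/
def SmoothMat {n : ℕ} (G : Pt n → Matrix (Fin n) (Fin n) ℝ) : Prop :=
  ∀ a b, ContDiff ℝ (⊤ : ℕ∞) (fun x => G x a b)

/-- `G` and `Ginv` are mutually inverse symmetric matrices at every point. -/
def MetricPair {n : ℕ} (G Ginv : Pt n → Matrix (Fin n) (Fin n) ℝ) : Prop :=
  (∀ x, (G x).IsSymm) ∧ (∀ x, G x * Ginv x = 1) ∧ (∀ x, Ginv x * G x = 1)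

/-- The evaluation `G(X,Y)` of the metric on two vector fields. -/
def gPair {n : ℕ} (G : Pt n → Matrix (Fin n) (Fin n) ℝ) (X Y : VF n) : Pt n → ℝ :=
  fun x => ∑ a, ∑ b, G x a b * X x a * Y x b


section Helpers
variable {n : ℕ}

lemma pd_sum {n : ℕ} {ι : Type*} (s : Finset ι) (u : ι → Pt n → ℝ) {x : Pt n}
    (hu : ∀ i ∈ s, DifferentiableAt ℝ (u i) x) (b : Fin n) :
    pd (fun y => ∑ i ∈ s, u i y) b x = ∑ i ∈ s, pd (u i) b x := by
  unfold pd; rw [fderiv_fun_sum hu]; simp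

lemma pd_mul {n : ℕ} {u v : Pt n → ℝ} {x : Pt n}
    (hu : DifferentiableAt ℝ u x) (hv : DifferentiableAt ℝ v x) (b : Fin n) :
    pd (fun y => u y * v y) b x = pd u b x * v x + u x * pd v b x := by
  unfold pd; rw [fderiv_fun_mul hu hv]; simp; ring

lemma pd_const {n : ℕ} (c : ℝ) (b : Fin n) (x : Pt n) :
    pd (fun _ => c) b x = 0 := by simp [pd]

lemma smooth_pd {n : ℕ} {f : Pt n → ℝ} (hf : ContDiff ℝ (⊤ : ℕ∞) f) (c : Fin n) :
    ContDiff ℝ (⊤ : ℕ∞) (fun y => pd f c y) :=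
  (hf.fderiv_right (by simp)).clm_apply contDiff_const

lemma pd_pd_comm {n : ℕ} {f : Pt n → ℝ} (hf : ContDiff ℝ (⊤ : ℕ∞) f) (b c : Fin n) (x : Pt n) :
    pd (fun y => pd f c y) b x = pd (fun y => pd f b y) c x := by
  have hdf : DifferentiableAt ℝ (fderiv ℝ f) x :=
    ((hf.fderiv_right (m := (⊤ : ℕ∞)) (by simp)).differentiable (by simp)).differentiableAt
  have key : ∀ (v : Pt n) (w : Fin n), pd (fun y => fderiv ℝ f y v) w x
      = fderiv ℝ (fderiv ℝ f) x (Pi.single w 1) v := by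
    intro v w
    unfold pd
    rw [fderiv_clm_apply hdf (differentiableAt_const v)]
    simp
  show pd (fun y => fderiv ℝ f y (Pi.single c 1)) b x
      = pd (fun y => fderiv ℝ f y (Pi.single b 1)) c x
  rw [key, key]
  exact (hf.contDiffAt.isSymmSndFDerivAt (by rw [minSmoothness_of_isRCLikeNormedField]; exact WithTop.coe_le_coe.mpr le_top)).eq _ _

lemma pd_mul3 {n : ℕ} {u v w : Pt n → ℝ} {x : Pt n}
    (hu : DifferentiableAt ℝ u x) (hv : DifferentiableAt ℝ v x)
    (hw : DifferentiableAt ℝ w x) (b : Fin n) :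
    pd (fun y => u y * v y * w y) b x
      = pd u b x * v x * w x + u x * pd v b x * w x + u x * v x * pd w b x := by
  rw [pd_mul (u := fun y => u y * v y) (hu.mul hv) hw, pd_mul hu hv]; ring

end Helpers
section Helpers2
open Finset
variable {n : ℕ}

lemma sum_swap12 (H : Fin n → Fin n → Fin n → ℝ) :
    ∑ u, ∑ v, ∑ w, H u v w = ∑ u, ∑ v, ∑ w, H v u w := Finset.sum_comm

lemma sum_swap23 (H : Fin n → Fin n → Fin n → ℝ) :
    ∑ u, ∑ v, ∑ w, H u v w = ∑ u, ∑ v, ∑ w, H u w v :=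
  Finset.sum_congr rfl fun _ _ => Finset.sum_comm

lemma sum_cyc (H : Fin n → Fin n → Fin n → ℝ) :
    ∑ u, ∑ v, ∑ w, H u v w = ∑ u, ∑ v, ∑ w, H v w u :=
  (sum_swap23 H).trans (sum_swap12 (fun u v w => H u w v))

lemma sum_cyc' (H : Fin n → Fin n → Fin n → ℝ) :
    ∑ u, ∑ v, ∑ w, H u v w = ∑ u, ∑ v, ∑ w, H w u v :=
  (sum_cyc H).trans (sum_cyc (fun u v w => H v w u))

lemma sum_swap13 (H : Fin n → Fin n → Fin n → ℝ) :
    ∑ u, ∑ v, ∑ w, H u v w = ∑ u, ∑ v, ∑ w, H w v u :=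
  (sum_cyc H).trans (sum_swap23 (fun u v w => H v w u))

lemma prod_iter (K : Fin n → Fin n → Fin n → Fin n → ℝ) :
    ∑ x : Fin n × Fin n, ∑ y : Fin n × Fin n, K x.1 x.2 y.1 y.2
      = ∑ c, ∑ d, ∑ p, ∑ q, K c d p q := by
  rw [Fintype.sum_prod_type]
  refine Finset.sum_congr rfl fun c _ => ?_
  refine Finset.sum_congr rfl fun d _ => ?_
  exact Fintype.sum_prod_type (f := fun y : Fin n × Fin n => K c d y.1 y.2)

lemma sum4_blocks (H : Fin n → Fin n → Fin n → Fin n → ℝ) :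
    ∑ c, ∑ d, ∑ p, ∑ q, H c d p q = ∑ p, ∑ q, ∑ c, ∑ d, H c d p q := by
  rw [← prod_iter H, ← prod_iter (fun p q c d => H c d p q), Finset.sum_comm]

lemma key (gI : Fin n → Fin n → ℝ) (dG dgI : Fin n → Fin n → Fin n → ℝ)
    (df dg F Gd : Fin n → ℝ) (ddf ddg : Fin n → Fin n → ℝ)
    (hgI : ∀ i j, gI i j = gI j i)
    (hdG : ∀ e p q, dG e p q = dG e q p)
    (hddf : ∀ b c, ddf b c = ddf c b)
    (hddg : ∀ b c, ddg b c = ddg c b)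
    (hdgI : ∀ b c d, dgI b c d = ∑ p, ∑ q, -(gI c p * dG b p q * gI q d))
    (hF : ∀ b, F b = ∑ p, gI b p * df p)
    (hGd : ∀ b, Gd b = ∑ p, gI b p * dg p)
    (a : Fin n) :
    ∑ b, gI a b * ∑ c, ∑ d,
        (ddf b c * gI c d * dg d + df c * dgI b c d * dg d + df c * gI c d * ddg b d)
      = ((∑ b, F b * ∑ c, (dgI b a c * dg c + gI a c * ddg b c))
          + ∑ b, ∑ c, ((1/2) * ∑ d, gI a d * (dG c d b + dG b d c - dG d b c)) * F b * Gd c)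
        + ((∑ b, Gd b * ∑ c, (dgI b a c * df c + gI a c * ddf b c))
          + ∑ b, ∑ c, ((1/2) * ∑ d, gI a d * (dG c d b + dG b d c - dG d b c)) * Gd b * F c) := by
  have e1 : (∑ b, ∑ c, ∑ d, gI a b * (ddf b c * gI c d * dg d))
      = ∑ b, ∑ c, Gd b * (gI a c * ddf b c) := by
    calc (∑ u, ∑ v, ∑ w, gI a u * (ddf u v * gI v w * dg w))
        = ∑ u, ∑ v, ∑ w, gI a v * (ddf v u * gI u w * dg w) :=
          sum_swap12 (fun u v w => gI a u * (ddf u v * gI v w * dg w))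
      _ = ∑ u, ∑ v, ∑ w, gI u w * dg w * (gI a v * ddf u v) := by
          refine Finset.sum_congr rfl fun u _ => Finset.sum_congr rfl fun v _ =>
            Finset.sum_congr rfl fun w _ => ?_
          rw [hddf v u]; ring
      _ = ∑ b, ∑ c, Gd b * (gI a c * ddf b c) := by
          refine Finset.sum_congr rfl fun b _ => Finset.sum_congr rfl fun c _ => ?_
          rw [hGd b, Finset.sum_mul]
  have e2 : (∑ b, ∑ c, ∑ d, gI a b * (df c * gI c d * ddg b d))
      = ∑ b, ∑ c, F b * (gI a c * ddg b c) := by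
    calc (∑ u, ∑ v, ∑ w, gI a u * (df v * gI v w * ddg u w))
        = ∑ u, ∑ v, ∑ w, (fun u' v' w' => gI u' w' * df w' * (gI a v' * ddg u' v')) w u v := by
          refine Finset.sum_congr rfl fun u _ => Finset.sum_congr rfl fun v _ =>
            Finset.sum_congr rfl fun w _ => ?_
          simp only
          rw [hgI v w, hddg u w]; ring
      _ = ∑ u, ∑ v, ∑ w, gI u w * df w * (gI a v * ddg u v) :=
          (sum_cyc' (fun u v w => gI u w * df w * (gI a v * ddg u v))).symm
      _ = ∑ b, ∑ c, F b * (gI a c * ddg b c) := by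
          refine Finset.sum_congr rfl fun b _ => Finset.sum_congr rfl fun c _ => ?_
          rw [hF b, Finset.sum_mul]
  have f1 : (∑ b, ∑ c, ∑ d, gI a b * (df c * dgI b c d * dg d))
      = -∑ b, ∑ p, ∑ q, gI a b * dG b p q * F p * Gd q := by
    have h2 : ∀ b p q, (∑ c, ∑ d, -(gI a b * (df c * (gI c p * dG b p q * gI q d) * dg d)))
        = -(gI a b * dG b p q * F p * Gd q) := by
      intro b p q
      rw [hF p, hGd q]
      rw [show gI a b * dG b p q * (∑ c, gI p c * df c) * (∑ d, gI q d * dg d)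
            = ∑ c, ∑ d, gI a b * dG b p q * (gI p c * df c) * (gI q d * dg d) by
          simp only [Finset.mul_sum, Finset.sum_mul]
          all_goals exact Finset.sum_comm]
      rw [← Finset.sum_neg_distrib]
      refine Finset.sum_congr rfl fun c _ => ?_
      rw [← Finset.sum_neg_distrib]
      refine Finset.sum_congr rfl fun d _ => ?_
      rw [hgI c p]; ring
    calc (∑ b, ∑ c, ∑ d, gI a b * (df c * dgI b c d * dg d))
        = ∑ b, ∑ c, ∑ d, ∑ p, ∑ q, -(gI a b * (df c * (gI c p * dG b p q * gI q d) * dg d)) := by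
          refine Finset.sum_congr rfl fun b _ => Finset.sum_congr rfl fun c _ =>
            Finset.sum_congr rfl fun d _ => ?_
          rw [hdgI]
          simp only [Finset.mul_sum, Finset.sum_mul, mul_neg, neg_mul]
          all_goals exact Finset.sum_congr rfl fun p _ => Finset.sum_congr rfl fun q _ => by ring
      _ = ∑ b, ∑ p, ∑ q, ∑ c, ∑ d, -(gI a b * (df c * (gI c p * dG b p q * gI q d) * dg d)) :=
          Finset.sum_congr rfl fun b _ => sum4_blocks _
      _ = ∑ b, ∑ p, ∑ q, -(gI a b * dG b p q * F p * Gd q) :=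
          Finset.sum_congr rfl fun b _ => Finset.sum_congr rfl fun p _ =>
            Finset.sum_congr rfl fun q _ => h2 b p q
      _ = -∑ b, ∑ p, ∑ q, gI a b * dG b p q * F p * Gd q := by
          simp only [Finset.sum_neg_distrib]
  have f2 : (∑ b, F b * ∑ c, dgI b a c * dg c)
      = -∑ b, ∑ p, ∑ q, gI a p * dG b p q * F b * Gd q := by
    calc (∑ b, F b * ∑ c, dgI b a c * dg c)
        = ∑ b, ∑ c, ∑ p, ∑ q, -(F b * (gI a p * dG b p q * gI q c) * dg c) := by
          refine Finset.sum_congr rfl fun b _ => ?_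
          rw [Finset.mul_sum]
          refine Finset.sum_congr rfl fun c _ => ?_
          rw [hdgI]
          simp only [Finset.mul_sum, Finset.sum_mul, mul_neg, neg_mul]
          all_goals exact Finset.sum_congr rfl fun p _ => Finset.sum_congr rfl fun q _ => by ring
      _ = ∑ b, ∑ p, ∑ q, ∑ c, -(F b * (gI a p * dG b p q * gI q c) * dg c) :=
          Finset.sum_congr rfl fun b _ =>
            sum_cyc' (fun c p q => -(F b * (gI a p * dG b p q * gI q c) * dg c))
      _ = ∑ b, ∑ p, ∑ q, -(gI a p * dG b p q * F b * Gd q) := by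
          refine Finset.sum_congr rfl fun b _ => Finset.sum_congr rfl fun p _ =>
            Finset.sum_congr rfl fun q _ => ?_
          rw [hGd q, show gI a p * dG b p q * F b * (∑ c, gI q c * dg c)
              = ∑ c, gI a p * dG b p q * F b * (gI q c * dg c) from Finset.mul_sum _ _ _,
            ← Finset.sum_neg_distrib]
          exact Finset.sum_congr rfl fun c _ => by ring
      _ = -∑ b, ∑ p, ∑ q, gI a p * dG b p q * F b * Gd q := by
          simp only [Finset.sum_neg_distrib]
  have f3 : (∑ b, Gd b * ∑ c, dgI b a c * df c)
      = -∑ b, ∑ p, ∑ q, gI a p * dG b p q * Gd b * F q := by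
    calc (∑ b, Gd b * ∑ c, dgI b a c * df c)
        = ∑ b, ∑ c, ∑ p, ∑ q, -(Gd b * (gI a p * dG b p q * gI q c) * df c) := by
          refine Finset.sum_congr rfl fun b _ => ?_
          rw [Finset.mul_sum]
          refine Finset.sum_congr rfl fun c _ => ?_
          rw [hdgI]
          simp only [Finset.mul_sum, Finset.sum_mul, mul_neg, neg_mul]
          all_goals exact Finset.sum_congr rfl fun p _ => Finset.sum_congr rfl fun q _ => by ring
      _ = ∑ b, ∑ p, ∑ q, ∑ c, -(Gd b * (gI a p * dG b p q * gI q c) * df c) :=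
          Finset.sum_congr rfl fun b _ =>
            (sum_cyc' (fun c p q => -(Gd b * (gI a p * dG b p q * gI q c) * df c)))
      _ = ∑ b, ∑ p, ∑ q, -(gI a p * dG b p q * Gd b * F q) := by
          refine Finset.sum_congr rfl fun b _ => Finset.sum_congr rfl fun p _ =>
            Finset.sum_congr rfl fun q _ => ?_
          rw [hF q, show gI a p * dG b p q * Gd b * (∑ c, gI q c * df c)
              = ∑ c, gI a p * dG b p q * Gd b * (gI q c * df c) from Finset.mul_sum _ _ _,
            ← Finset.sum_neg_distrib]
          exact Finset.sum_congr rfl fun c _ => by ring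
      _ = -∑ b, ∑ p, ∑ q, gI a p * dG b p q * Gd b * F q := by
          simp only [Finset.sum_neg_distrib]
  -- Γ-part, f-side
  have f4 : (∑ b, ∑ c, ((1/2) * ∑ d, gI a d * (dG c d b + dG b d c - dG d b c)) * F b * Gd c)
      = (1/2) * (∑ b, ∑ p, ∑ q, gI a p * dG b p q * Gd b * F q)
        + (1/2) * (∑ b, ∑ p, ∑ q, gI a p * dG b p q * F b * Gd q)
        - (1/2) * (∑ b, ∑ p, ∑ q, gI a b * dG b p q * F p * Gd q) := by
    have expand : (∑ b, ∑ c, ((1/2) * ∑ d, gI a d * (dG c d b + dG b d c - dG d b c)) * F b * Gd c)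
        = (∑ b, ∑ c, ∑ d, (1/2) * (gI a d * dG c d b * F b * Gd c))
          + (∑ b, ∑ c, ∑ d, (1/2) * (gI a d * dG b d c * F b * Gd c))
          - (∑ b, ∑ c, ∑ d, (1/2) * (gI a d * dG d b c * F b * Gd c)) := by
      rw [← Finset.sum_add_distrib, ← Finset.sum_sub_distrib]
      refine Finset.sum_congr rfl fun b _ => ?_
      rw [← Finset.sum_add_distrib, ← Finset.sum_sub_distrib]
      refine Finset.sum_congr rfl fun c _ => ?_
      rw [← Finset.sum_add_distrib, ← Finset.sum_sub_distrib,
        show ((1/2 : ℝ) * ∑ d, gI a d * (dG c d b + dG b d c - dG d b c)) * F b * Gd c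
          = ∑ d, ((1/2) * (gI a d * (dG c d b + dG b d c - dG d b c)) * F b * Gd c) by
            rw [Finset.mul_sum, Finset.sum_mul, Finset.sum_mul]]
      exact Finset.sum_congr rfl fun d _ => by ring
    rw [expand]
    have t1 : (∑ b, ∑ c, ∑ d, (1/2 : ℝ) * (gI a d * dG c d b * F b * Gd c))
        = (1/2) * (∑ b, ∑ p, ∑ q, gI a p * dG b p q * Gd b * F q) := by
      simp only [Finset.mul_sum]
      exact ((sum_cyc (fun u v w => (1/2 : ℝ) * (gI a v * dG u v w * Gd u * F w))).trans
        (Finset.sum_congr rfl fun u _ => Finset.sum_congr rfl fun v _ =>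
          Finset.sum_congr rfl fun w _ => by ring)).symm
    have t3 : (∑ b, ∑ c, ∑ d, (1/2 : ℝ) * (gI a d * dG b d c * F b * Gd c))
        = (1/2) * (∑ b, ∑ p, ∑ q, gI a p * dG b p q * F b * Gd q) := by
      simp only [Finset.mul_sum]
      exact ((sum_swap23 (fun u v w => (1/2 : ℝ) * (gI a v * dG u v w * F u * Gd w))).trans
        (Finset.sum_congr rfl fun u _ => Finset.sum_congr rfl fun v _ =>
          Finset.sum_congr rfl fun w _ => by ring)).symm
    have t5 : (∑ b, ∑ c, ∑ d, (1/2 : ℝ) * (gI a d * dG d b c * F b * Gd c))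
        = (1/2) * (∑ b, ∑ p, ∑ q, gI a b * dG b p q * F p * Gd q) := by
      simp only [Finset.mul_sum]
      exact ((sum_cyc' (fun u v w => (1/2 : ℝ) * (gI a u * dG u v w * F v * Gd w))).trans
        (Finset.sum_congr rfl fun u _ => Finset.sum_congr rfl fun v _ =>
          Finset.sum_congr rfl fun w _ => by ring)).symm
    rw [t1, t3, t5]
  -- Γ-part, g-side
  have f5 : (∑ b, ∑ c, ((1/2) * ∑ d, gI a d * (dG c d b + dG b d c - dG d b c)) * Gd b * F c)
      = (1/2) * (∑ b, ∑ p, ∑ q, gI a p * dG b p q * F b * Gd q)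
        + (1/2) * (∑ b, ∑ p, ∑ q, gI a p * dG b p q * Gd b * F q)
        - (1/2) * (∑ b, ∑ p, ∑ q, gI a b * dG b p q * F p * Gd q) := by
    have expand : (∑ b, ∑ c, ((1/2) * ∑ d, gI a d * (dG c d b + dG b d c - dG d b c)) * Gd b * F c)
        = (∑ b, ∑ c, ∑ d, (1/2) * (gI a d * dG c d b * Gd b * F c))
          + (∑ b, ∑ c, ∑ d, (1/2) * (gI a d * dG b d c * Gd b * F c))
          - (∑ b, ∑ c, ∑ d, (1/2) * (gI a d * dG d b c * Gd b * F c)) := by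
      rw [← Finset.sum_add_distrib, ← Finset.sum_sub_distrib]
      refine Finset.sum_congr rfl fun b _ => ?_
      rw [← Finset.sum_add_distrib, ← Finset.sum_sub_distrib]
      refine Finset.sum_congr rfl fun c _ => ?_
      rw [← Finset.sum_add_distrib, ← Finset.sum_sub_distrib,
        show ((1/2 : ℝ) * ∑ d, gI a d * (dG c d b + dG b d c - dG d b c)) * Gd b * F c
          = ∑ d, ((1/2) * (gI a d * (dG c d b + dG b d c - dG d b c)) * Gd b * F c) by
            rw [Finset.mul_sum, Finset.sum_mul, Finset.sum_mul]]
      exact Finset.sum_congr rfl fun d _ => by ring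
    rw [expand]
    have t2 : (∑ b, ∑ c, ∑ d, (1/2 : ℝ) * (gI a d * dG c d b * Gd b * F c))
        = (1/2) * (∑ b, ∑ p, ∑ q, gI a p * dG b p q * F b * Gd q) := by
      simp only [Finset.mul_sum]
      exact ((sum_cyc (fun u v w => (1/2 : ℝ) * (gI a v * dG u v w * F u * Gd w))).trans
        (Finset.sum_congr rfl fun u _ => Finset.sum_congr rfl fun v _ =>
          Finset.sum_congr rfl fun w _ => by ring)).symm
    have t4 : (∑ b, ∑ c, ∑ d, (1/2 : ℝ) * (gI a d * dG b d c * Gd b * F c))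
        = (1/2) * (∑ b, ∑ p, ∑ q, gI a p * dG b p q * Gd b * F q) := by
      simp only [Finset.mul_sum]
      exact ((sum_swap23 (fun u v w => (1/2 : ℝ) * (gI a v * dG u v w * Gd u * F w))).trans
        (Finset.sum_congr rfl fun u _ => Finset.sum_congr rfl fun v _ =>
          Finset.sum_congr rfl fun w _ => by ring)).symm
    have t6 : (∑ b, ∑ c, ∑ d, (1/2 : ℝ) * (gI a d * dG d b c * Gd b * F c))
        = (1/2) * (∑ b, ∑ p, ∑ q, gI a b * dG b p q * F p * Gd q) := by
      simp only [Finset.mul_sum]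
      refine ((sum_swap13 (fun u v w => (1/2 : ℝ) * (gI a u * dG u v w * F v * Gd w))).trans
        (Finset.sum_congr rfl fun u _ => Finset.sum_congr rfl fun v _ =>
          Finset.sum_congr rfl fun w _ => ?_)).symm
      rw [hdG w v u]; ring
    rw [t2, t4, t6]
  -- assemble
  have lhs_split : (∑ b, gI a b * ∑ c, ∑ d,
        (ddf b c * gI c d * dg d + df c * dgI b c d * dg d + df c * gI c d * ddg b d))
      = (∑ b, ∑ c, ∑ d, gI a b * (ddf b c * gI c d * dg d))
        + (∑ b, ∑ c, ∑ d, gI a b * (df c * dgI b c d * dg d))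
        + (∑ b, ∑ c, ∑ d, gI a b * (df c * gI c d * ddg b d)) := by
    rw [← Finset.sum_add_distrib, ← Finset.sum_add_distrib]
    refine Finset.sum_congr rfl fun b _ => ?_
    rw [Finset.mul_sum, ← Finset.sum_add_distrib, ← Finset.sum_add_distrib]
    refine Finset.sum_congr rfl fun c _ => ?_
    rw [Finset.mul_sum, ← Finset.sum_add_distrib, ← Finset.sum_add_distrib]
    exact Finset.sum_congr rfl fun d _ => by ring
  have rhs_f : (∑ b, F b * ∑ c, (dgI b a c * dg c + gI a c * ddg b c))
      = (∑ b, F b * ∑ c, dgI b a c * dg c) + (∑ b, ∑ c, F b * (gI a c * ddg b c)) := by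
    rw [← Finset.sum_add_distrib]
    refine Finset.sum_congr rfl fun b _ => ?_
    rw [Finset.mul_sum, Finset.mul_sum, ← Finset.sum_add_distrib]
    exact Finset.sum_congr rfl fun c _ => by ring
  have rhs_g : (∑ b, Gd b * ∑ c, (dgI b a c * df c + gI a c * ddf b c))
      = (∑ b, Gd b * ∑ c, dgI b a c * df c) + (∑ b, ∑ c, Gd b * (gI a c * ddf b c)) := by
    rw [← Finset.sum_add_distrib]
    refine Finset.sum_congr rfl fun b _ => ?_
    rw [Finset.mul_sum, Finset.mul_sum, ← Finset.sum_add_distrib]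
    exact Finset.sum_congr rfl fun c _ => by ring
  rw [lhs_split, rhs_f, rhs_g, e1, e2, f1, f2, f3, f4, f5]
  ring

end Helpers2

/-- The gradient map is a homomorphism of symmetric algebras:
`grad_G ⟨⟨f,g⟩⟩_G = ⟨grad_G f : grad_G g⟩` for the Levi-Civita connection of `G`. -/
theorem gradient_symmetric_algebra_hom {n : ℕ}
    (G Ginv : Pt n → Matrix (Fin n) (Fin n) ℝ)
    (hG : SmoothMat G) (hGinv : SmoothMat Ginv) (hpair : MetricPair G Ginv)
    (f g : Pt n → ℝ) (hf : ContDiff ℝ (⊤ : ℕ∞) f) (hg : ContDiff ℝ (⊤ : ℕ∞) g) :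
    gradV Ginv (beltrami Ginv f g)
      = symProd (leviCivita G Ginv) (gradV Ginv f) (gradV Ginv g) := by
  obtain ⟨hsymG, hGG, hGG'⟩ := hpair
  funext x a
  -- symmetry of Ginv
  have hginvsym : ∀ y : Pt n, Matrix.transpose (Ginv y) = Ginv y := by
    intro y
    calc Matrix.transpose (Ginv y) = Matrix.transpose (Ginv y) * (G y * Ginv y) := by rw [hGG y, mul_one]
      _ = (Matrix.transpose (Ginv y) * Matrix.transpose (G y)) * Ginv y := by rw [(hsymG y).eq, Matrix.mul_assoc]
      _ = Matrix.transpose (G y * Ginv y) * Ginv y := by rw [Matrix.transpose_mul]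
      _ = Ginv y := by rw [hGG y, Matrix.transpose_one, Matrix.one_mul]
  have hgI : ∀ i j : Fin n, Ginv x i j = Ginv x j i := by
    intro i j
    calc Ginv x i j = Matrix.transpose (Ginv x) j i := (Matrix.transpose_apply (Ginv x) j i).symm
      _ = Ginv x j i := by rw [hginvsym x]
  have hGsym : ∀ (y : Pt n) (p q : Fin n), G y p q = G y q p := by
    intro y p q
    calc G y p q = Matrix.transpose (G y) q p := (Matrix.transpose_apply (G y) q p).symm
      _ = G y q p := by rw [(hsymG y).eq]
  -- differentiability helpers
  have dpf : ∀ c, ContDiff ℝ (⊤ : ℕ∞) (fun y => pd f c y) := smooth_pd hf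
  have dpg : ∀ c, ContDiff ℝ (⊤ : ℕ∞) (fun y => pd g c y) := smooth_pd hg
  have hterm : ∀ c d, ContDiff ℝ (⊤ : ℕ∞) (fun y => pd f c y * Ginv y c d * pd g d y) :=
    fun c d => ((dpf c).mul (hGinv c d)).mul (dpg d)
  have hdG : ∀ (e p q : Fin n), pd (fun y => G y p q) e x = pd (fun y => G y q p) e x := by
    intro e p q
    congr 1
    funext y
    exact hGsym y p q
  -- differentiating the relation Ginv * G = 1
  have hstep : ∀ (b c j : Fin n),
      (∑ k, (pd (fun y => Ginv y c k) b x * G x k j + Ginv x c k * pd (fun y => G y k j) b x))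
        = 0 := by
    intro b c j
    have hfun : (fun y : Pt n => ∑ k, Ginv y c k * G y k j)
        = (fun _ => (1 : Matrix (Fin n) (Fin n) ℝ) c j) := by
      funext y
      rw [← Matrix.mul_apply, hGG' y]
    have hsum := pd_sum (Finset.univ) (fun k => fun y => Ginv y c k * G y k j)
      (fun k _ => (((hGinv c k).mul (hG k j)).differentiable (by simp)) x) b
    rw [hfun, pd_const] at hsum
    calc (∑ k, (pd (fun y => Ginv y c k) b x * G x k j + Ginv x c k * pd (fun y => G y k j) b x))
        = ∑ k, pd (fun y => Ginv y c k * G y k j) b x :=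
          Finset.sum_congr rfl fun k _ =>
            (pd_mul (((hGinv c k).differentiable (by simp)) x) (((hG k j).differentiable (by simp)) x)
              b).symm
      _ = 0 := hsum.symm
  have hdgI : ∀ (b c d : Fin n), pd (fun y => Ginv y c d) b x
      = ∑ p, ∑ q, -(Ginv x c p * pd (fun y => G y p q) b x * Ginv x q d) := by
    intro b c d
    have hkd : ∀ k : Fin n, (∑ j, G x k j * Ginv x j d) = if k = d then (1:ℝ) else 0 := by
      intro k
      rw [← Matrix.mul_apply, hGG x, Matrix.one_apply]
    calc pd (fun y => Ginv y c d) b x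
        = ∑ k, pd (fun y => Ginv y c k) b x * (if k = d then (1:ℝ) else 0) := by
          symm
          simp
      _ = ∑ k, pd (fun y => Ginv y c k) b x * (∑ j, G x k j * Ginv x j d) := by
          refine Finset.sum_congr rfl fun k _ => ?_
          rw [hkd k]
      _ = ∑ k, ∑ j, pd (fun y => Ginv y c k) b x * (G x k j * Ginv x j d) :=
          Finset.sum_congr rfl fun k _ => Finset.mul_sum _ _ _
      _ = ∑ j, ∑ k, pd (fun y => Ginv y c k) b x * (G x k j * Ginv x j d) := Finset.sum_comm
      _ = ∑ j, (∑ k, pd (fun y => Ginv y c k) b x * G x k j) * Ginv x j d := by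
          refine Finset.sum_congr rfl fun j _ => ?_
          rw [Finset.sum_mul]
          exact Finset.sum_congr rfl fun k _ => by ring
      _ = ∑ j, (-∑ k, Ginv x c k * pd (fun y => G y k j) b x) * Ginv x j d := by
          refine Finset.sum_congr rfl fun j _ => ?_
          congr 1
          have h0 := hstep b c j
          rw [Finset.sum_add_distrib] at h0
          linarith
      _ = ∑ j, ∑ k, -(Ginv x c k * pd (fun y => G y k j) b x * Ginv x j d) := by
          refine Finset.sum_congr rfl fun j _ => ?_
          rw [neg_mul, Finset.sum_mul, ← Finset.sum_neg_distrib]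
      _ = ∑ p, ∑ q, -(Ginv x c p * pd (fun y => G y p q) b x * Ginv x q d) := Finset.sum_comm
  -- Schwarz symmetry of second partials
  have hddf : ∀ b c : Fin n, pd (fun y => pd f c y) b x = pd (fun y => pd f b y) c x :=
    fun b c => pd_pd_comm hf b c x
  have hddg : ∀ b c : Fin n, pd (fun y => pd g c y) b x = pd (fun y => pd g b y) c x :=
    fun b c => pd_pd_comm hg b c x
  -- derivative of the beltrami bracket
  have pdB : ∀ b : Fin n, pd (fun y => ∑ c, ∑ d, pd f c y * Ginv y c d * pd g d y) b x
      = ∑ c, ∑ d, (pd (fun y => pd f c y) b x * Ginv x c d * pd g d x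
          + pd f c x * pd (fun y => Ginv y c d) b x * pd g d x
          + pd f c x * Ginv x c d * pd (fun y => pd g d y) b x) := by
    intro b
    rw [pd_sum Finset.univ (fun c => fun y => ∑ d, pd f c y * Ginv y c d * pd g d y)
      (fun c _ => ((ContDiff.sum (fun d _ => hterm c d)).differentiable (by simp)) x) b]
    refine Finset.sum_congr rfl fun c _ => ?_
    rw [pd_sum Finset.univ (fun d => fun y => pd f c y * Ginv y c d * pd g d y)
      (fun d _ => (((hterm c d)).differentiable (by simp)) x) b]
    refine Finset.sum_congr rfl fun d _ => ?_
    exact pd_mul3 (((dpf c).differentiable (by simp)) x) (((hGinv c d).differentiable (by simp)) x)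
      (((dpg d).differentiable (by simp)) x) b
  -- derivative of gradient components
  have pdGf : ∀ b : Fin n, pd (fun y => ∑ c, Ginv y a c * pd f c y) b x
      = ∑ c, (pd (fun y => Ginv y a c) b x * pd f c x + Ginv x a c * pd (fun y => pd f c y) b x) := by
    intro b
    rw [pd_sum Finset.univ (fun c => fun y => Ginv y a c * pd f c y)
      (fun c _ => (((hGinv a c).mul (dpf c)).differentiable (by simp)) x) b]
    exact Finset.sum_congr rfl fun c _ =>
      pd_mul (((hGinv a c).differentiable (by simp)) x) (((dpf c).differentiable (by simp)) x) b
  have pdGg : ∀ b : Fin n, pd (fun y => ∑ c, Ginv y a c * pd g c y) b x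
      = ∑ c, (pd (fun y => Ginv y a c) b x * pd g c x + Ginv x a c * pd (fun y => pd g c y) b x) := by
    intro b
    rw [pd_sum Finset.univ (fun c => fun y => Ginv y a c * pd g c y)
      (fun c _ => (((hGinv a c).mul (dpg c)).differentiable (by simp)) x) b]
    exact Finset.sum_congr rfl fun c _ =>
      pd_mul (((hGinv a c).differentiable (by simp)) x) (((dpg c).differentiable (by simp)) x) b
  have hbel : beltrami Ginv f g = fun y => ∑ c, ∑ d, pd f c y * Ginv y c d * pd g d y := rfl
  rw [hbel]
  simp only [gradV, symProd, nabla, leviCivita]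
  simp only [pdB, pdGf, pdGg]
  exact key (Ginv x) (fun e p q => pd (fun y => G y p q) e x)
    (fun b c d => pd (fun y => Ginv y c d) b x)
    (fun c => pd f c x) (fun c => pd g c x)
    (fun b => ∑ p, Ginv x b p * pd f p x) (fun b => ∑ p, Ginv x b p * pd g p x)
    (fun b c => pd (fun y => pd f c y) b x) (fun b c => pd (fun y => pd g c y) b x)
    hgI hdG hddf hddg hdgI (fun b => rfl) (fun b => rfl) a
end
end

section
/- For a pseudo-Riemannian metric G on M and a gradient vector field g = grad_G V, the pushforward under ♭_G of the vertical lift g^v on TM equals grad_{G^c} V^v composed with ♭_G, where V^v is the vertical lift of V to T*M and G^c is the Riemannian extension of the Levi-Civita connection of G. Moreover V^g ∘ ♭_G = V^c, the complete lift of V to TM. -/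
open scoped BigOperators
noncomputable section

/-- Points of the (co)tangent bundle in coordinates: `(x, v)` resp. `(x, p)`. -/
abbrev TPt (n : ℕ) : Type := Pt n × Pt n

/-- Complete lift of a function to `TM`: `f^c(x,v) = ⟨df(x), v⟩`. -/
def fc {n : ℕ} (f : Pt n → ℝ) : TPt n → ℝ := fun q => ∑ a, pd f a q.1 * q.2 a

/-- Vertical lift of a function to `TM` (or `T*M`): `f^v = f ∘ pr₁`. -/
def fvT {n : ℕ} (f : Pt n → ℝ) : TPt n → ℝ := fun q => f q.1

/-- Complete lift of a vector field to `TM` in coordinates. -/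
def completeLift {n : ℕ} (X : VF n) : TPt n → TPt n :=
  fun q => (X q.1, fun a => ∑ b, pd (fun y => X y a) b q.1 * q.2 b)

/-- Vertical lift of a vector field to `TM`. -/
def verticalLift {n : ℕ} (X : VF n) : TPt n → TPt n := fun q => (0, X q.1)

/-- Action of a vector field on the double space on a function. -/
def vfApply {n : ℕ} (Z : TPt n → TPt n) (F : TPt n → ℝ) : TPt n → ℝ :=
  fun q => fderiv ℝ F q (Z q)

/-- Momentum function `V^X(x,p) = ⟨p, X(x)⟩` on `T*M`. -/
def momF {n : ℕ} (X : VF n) : TPt n → ℝ := fun q => ∑ a, q.2 a * X q.1 a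

/-- Partial derivative of a function on `T*M` in the `x^a` direction. -/
def pdX {n : ℕ} (F : TPt n → ℝ) (a : Fin n) (q : TPt n) : ℝ :=
  fderiv ℝ F q (Pi.single a 1, 0)

/-- Partial derivative of a function on `T*M` in the `p_a` direction. -/
def pdP {n : ℕ} (F : TPt n → ℝ) (a : Fin n) (q : TPt n) : ℝ :=
  fderiv ℝ F q (0, Pi.single a 1)

/-- Gradient w.r.t. the Riemannian extension `G^c` of a torsion-free connection `Γ`,
computed with the inverse metric matrix `[[0, I], [I, 2 p_a Γ^a_{bc}]]`. -/
def gradGc {n : ℕ} (Γ : Chr n) (F : TPt n → ℝ) : TPt n → TPt n :=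
  fun q => (fun a => pdP F a q,
    fun b => pdX F b q + 2 * ∑ a, ∑ c, q.2 a * Γ q.1 a b c * pdP F c q)

/-- The musical isomorphism `♭_G : TM → T*M`, `(x,v) ↦ (x, G(x)v)`. -/
def flatG {n : ℕ} (G : Pt n → Matrix (Fin n) (Fin n) ℝ) : TPt n → TPt n :=
  fun q => (q.1, fun a => ∑ b, G q.1 a b * q.2 b)

/-- The Riemannian extension metric `G^c` on `T*M`, with matrix
`[[−2 p_c Γ^c_{ab}, I], [I, 0]]`, evaluated on two tangent vectors `u, w` at `q`. -/
def gcPair {n : ℕ} (Γ : Chr n) (q : TPt n) (u w : TPt n) : ℝ :=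
  (∑ a, ∑ b, (-(2 * ∑ c, q.2 c * Γ q.1 c a b)) * u.1 a * w.1 b)
    + (∑ a, u.1 a * w.2 a) + ∑ a, u.2 a * w.1 a

/-- For a gradient vector field `g = grad_G V`, the pushforward under `♭_G` of the
vertical lift `g^v` equals `grad_{G^c} V^v ∘ ♭_G`, and moreover `V^g ∘ ♭_G = V^c`. -/
theorem flat_pushforward_verticalLift {n : ℕ}
    (G Ginv : Pt n → Matrix (Fin n) (Fin n) ℝ)
    (hG : SmoothMat G) (hGinv : SmoothMat Ginv) (hpair : MetricPair G Ginv)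
    (g : VF n) (hg : SmoothVF g) (V : Pt n → ℝ) (hV : ContDiff ℝ (⊤ : ℕ∞) V)
    (hgrad : ∀ x a, ∑ b, G x a b * g x b = pd V a x) :
    (∀ q : TPt n, fderiv ℝ (flatG G) q (verticalLift g q)
        = gradGc (leviCivita G Ginv) (fvT V) (flatG G q))
    ∧ (momF g ∘ flatG G = fc V) := by
  obtain ⟨hsymm, hGi, hiG⟩ := hpair
  constructor
  · intro q
    -- derivative CLMs for each component of the second factor
    set D1 : Fin n → Fin n → (TPt n →L[ℝ] ℝ) := fun a b =>
      (fderiv ℝ (fun x => G x a b) q.1).comp (ContinuousLinearMap.fst ℝ (Pt n) (Pt n)) with hD1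
    set D2 : Fin n → (TPt n →L[ℝ] ℝ) := fun b =>
      (ContinuousLinearMap.proj b).comp (ContinuousLinearMap.snd ℝ (Pt n) (Pt n)) with hD2
    have hGd : ∀ a b, HasFDerivAt (fun r : TPt n => G r.1 a b) (D1 a b) q := by
      intro a b
      exact (((hG a b).differentiable (by simp)) q.1).hasFDerivAt.comp q (hasFDerivAt_fst)
    have hsnd : ∀ b, HasFDerivAt (fun r : TPt n => r.2 b) (D2 b) q := by
      intro b
      exact (D2 b).hasFDerivAt
    have hcomp : ∀ a, HasFDerivAt (fun r : TPt n => ∑ b, G r.1 a b * r.2 b)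
        (∑ b, (G q.1 a b • D2 b + q.2 b • D1 a b)) q := by
      intro a
      exact HasFDerivAt.fun_sum fun b _ => (hGd a b).mul (hsnd b)
    have hflat : HasFDerivAt (flatG G)
        ((ContinuousLinearMap.fst ℝ (Pt n) (Pt n)).prod
          (ContinuousLinearMap.pi fun a => ∑ b, (G q.1 a b • D2 b + q.2 b • D1 a b))) q := by
      refine (hasFDerivAt_fst).prodMk ?_
      apply hasFDerivAt_pi'.2
      intro a
      simpa only [ContinuousLinearMap.proj_pi] using hcomp a
    have hVd2 : ∀ (q' : TPt n), HasFDerivAt (fvT V)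
        ((fderiv ℝ V q'.1).comp (ContinuousLinearMap.fst ℝ (Pt n) (Pt n))) q' := by
      intro q'
      exact ((hV.differentiable (by simp)) q'.1).hasFDerivAt.comp q' (hasFDerivAt_fst)
    have hpdP : ∀ (a : Fin n) (q' : TPt n), pdP (fvT V) a q' = 0 := by
      intro a q'
      rw [pdP, (hVd2 q').fderiv]
      simp
    have hpdX : ∀ (a : Fin n) (q' : TPt n), pdX (fvT V) a q' = pd V a q'.1 := by
      intro a q'
      rw [pdX, (hVd2 q').fderiv, pd]
      simp
    rw [hflat.fderiv]
    refine Prod.ext ?_ ?_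
    · funext a
      simp [verticalLift, gradGc, hpdP]
    · funext a
      simp only [verticalLift, gradGc, hpdP, hpdX, ContinuousLinearMap.prod_apply,
        ContinuousLinearMap.pi_apply, ContinuousLinearMap.sum_apply,
        ContinuousLinearMap.add_apply, ContinuousLinearMap.smul_apply,
        ContinuousLinearMap.coe_comp', Function.comp_apply,
        ContinuousLinearMap.coe_fst', ContinuousLinearMap.coe_snd',
        ContinuousLinearMap.proj_apply, hD1, hD2]
      simp only [map_zero, mul_zero, smul_eq_mul, mul_zero, add_zero]
      have : (flatG G q).1 = q.1 := rfl
      rw [this]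
      rw [← hgrad q.1 a]
      simp [mul_comm]
  · funext q
    have hsym : ∀ a b, G q.1 a b = G q.1 b a := by
      intro a b
      have := (hsymm q.1)
      exact (Matrix.IsSymm.apply this a b).symm
    simp only [Function.comp_apply, momF, flatG, fc]
    calc (∑ a, (∑ b, G q.1 a b * q.2 b) * g q.1 a)
        = ∑ a, ∑ b, G q.1 b a * g q.1 a * q.2 b := by
          refine Finset.sum_congr rfl fun a _ => ?_
          rw [Finset.sum_mul]
          refine Finset.sum_congr rfl fun b _ => ?_
          rw [hsym a b]; ring
      _ = ∑ b, (∑ a, G q.1 b a * g q.1 a) * q.2 b := by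
          rw [Finset.sum_comm]
          exact Finset.sum_congr rfl fun b _ => by rw [Finset.sum_mul]
      _ = ∑ b, pd V b q.1 * q.2 b := by
          refine Finset.sum_congr rfl fun b _ => ?_
          rw [hgrad q.1 b]
end
end

section
/- Suppose the state space diffeomorphism ψ : M^1 → M^2 between two externally equivalent gradient systems (each observable, with constant-rank observation codistribution and full-rank distribution S_0) intertwines the Levi-Civita connections of G^1 and G^2, i.e., ψ_*(∇^{G^1}_X Y) ∘ ψ^{-1} = ∇^{G^2}_{ψ_*X∘ψ^{-1}}(ψ_*Y∘ψ^{-1}) for all vector fields X, Y on M^1. Then ψ is an isometry: ψ*G^2 = G^1. -/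
open scoped BigOperators
noncomputable section

/-- Iterated symmetric products `⟨X₁ : ⟨X₂ : ⟨… : ⟨Xₛ : g⟩…⟩⟩⟩`. -/
def symProdList {n : ℕ} (Γ : Chr n) (L : List (VF n)) (g : VF n) : VF n :=
  L.foldr (fun X acc => symProd Γ X acc) g

/-- Iterated Lie derivatives `L_{X₁} L_{X₂} … L_{Xₛ} V`. -/
def lieDerList {n : ℕ} (L : List (VF n)) (V : Pt n → ℝ) : Pt n → ℝ :=
  L.foldr (fun X acc => dirDer X acc) V

/-- A generating function `L_{g_{i₁}} … L_{g_{iₛ}} V_j` of the observation space,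
indexed by the word `(i₁…iₛ, j)`. -/
def obsFun {n m : ℕ} (gs : Fin (m+1) → VF n) (Vs : Fin m → (Pt n → ℝ))
    (w : List (Fin (m+1)) × Fin m) : Pt n → ℝ :=
  lieDerList (w.1.map gs) (Vs w.2)

/-- Observability: the observation space distinguishes points. -/
def Observable {n m : ℕ} (gs : Fin (m+1) → VF n) (Vs : Fin m → (Pt n → ℝ)) : Prop :=
  ∀ x1 x2 : Pt n, (∀ w, obsFun gs Vs w x1 = obsFun gs Vs w x2) → x1 = x2

/-- The codistribution `dH(x)` spanned by the differentials of the observation space. -/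
def obsCodistrib {n m : ℕ} (gs : Fin (m+1) → VF n) (Vs : Fin m → (Pt n → ℝ))
    (x : Pt n) : Submodule ℝ ((Fin n → ℝ) →L[ℝ] ℝ) :=
  Submodule.span ℝ (Set.range fun w => fderiv ℝ (obsFun gs Vs w) x)

/-- Constant rank of the observation codistribution. -/
def ConstantRankObs {n m : ℕ} (gs : Fin (m+1) → VF n) (Vs : Fin m → (Pt n → ℝ)) : Prop :=
  ∃ r : ℕ, ∀ x : Pt n, Module.finrank ℝ (obsCodistrib gs Vs x) = r

/-- The vector fields of the gradient extension `Σ^e` on `T*M`: the `G^c`-gradients of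
the momentum functions `V^{g_i}` and of the vertical lifts `V_j^v`. -/
def gradExtVF {n m : ℕ} (Γ : Chr n) (gs : Fin (m+1) → VF n) (Vs : Fin m → (Pt n → ℝ)) :
    (Fin (m+1) ⊕ Fin m) → (TPt n → TPt n)
  | Sum.inl i => gradGc Γ (momF (gs i))
  | Sum.inr j => gradGc Γ (fvT (Vs j))

/-- The outputs of the gradient extension: `V_j^v` and `V^{g_j}`. -/
def gradExtOut {n m : ℕ} (gs : Fin (m+1) → VF n) (Vs : Fin m → (Pt n → ℝ)) :
    (Fin m ⊕ Fin m) → (TPt n → ℝ)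
  | Sum.inl j => fvT (Vs j)
  | Sum.inr j => momF (gs j.succ)

/-- Generating functions of the observation space `H^e` of the gradient extension. -/
def obsFunE {n m : ℕ} (Γ : Chr n) (gs : Fin (m+1) → VF n) (Vs : Fin m → (Pt n → ℝ))
    (w : List (Fin (m+1) ⊕ Fin m) × (Fin m ⊕ Fin m)) : TPt n → ℝ :=
  (w.1.map (gradExtVF Γ gs Vs)).foldr vfApply (gradExtOut gs Vs w.2)

/-- The observation codistribution `dH^e` of the gradient extension. -/
def obsCodistribE {n m : ℕ} (Γ : Chr n) (gs : Fin (m+1) → VF n) (Vs : Fin m → (Pt n → ℝ))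
    (q : TPt n) : Submodule ℝ (TPt n →L[ℝ] ℝ) :=
  Submodule.span ℝ (Set.range fun w => fderiv ℝ (obsFunE Γ gs Vs w) q)

/-- Generators of `S₀`: iterated symmetric products of the input vector fields by
elements of `{g_0,…,g_m}`. -/
def s0Gen {n m : ℕ} (Γ : Chr n) (gs : Fin (m+1) → VF n)
    (p : List (Fin (m+1)) × Fin m) : VF n :=
  symProdList Γ (p.1.map gs) (gs p.2.succ)

/-- Full-rankness of the distribution `S₀` generated by `S₀`. -/
def S0FullRank {n m : ℕ} (Γ : Chr n) (gs : Fin (m+1) → VF n) : Prop :=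
  ∀ x : Pt n, Submodule.span ℝ {v : Fin n → ℝ |
    ∃ p : List (Fin (m+1)) × Fin m, v = s0Gen Γ gs p x} = ⊤

namespace IsomAux
open Finset

variable {n : ℕ}

lemma single_sum (v : Fin n → ℝ) : ∑ b, v b • (Pi.single b 1 : Fin n → ℝ) = v := by
  funext j; simp [Pi.single_apply, Finset.sum_apply]

lemma dirDer_fderiv (X : VF n) (f : Pt n → ℝ) (x : Pt n) :
    dirDer X f x = fderiv ℝ f x (X x) := by
  have h : X x = ∑ b, X x b • (Pi.single b 1 : Fin n → ℝ) := (single_sum (X x)).symm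
  rw [dirDer]; conv_rhs => rw [h]
  rw [map_sum]
  exact Finset.sum_congr rfl fun b _ => by rw [map_smul]; simp [pd, smul_eq_mul]

lemma pd_const (c : ℝ) (b : Fin n) (x : Pt n) : pd (fun _ => c) b x = 0 := by
  simp [pd]

lemma pd_add {f g : Pt n → ℝ} {x : Pt n} (hf : DifferentiableAt ℝ f x)
    (hg : DifferentiableAt ℝ g x) (b : Fin n) :
    pd (fun y => f y + g y) b x = pd f b x + pd g b x := by
  simp [pd, fderiv_fun_add hf hg]

lemma pd_mul {f g : Pt n → ℝ} {x : Pt n} (hf : DifferentiableAt ℝ f x)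
    (hg : DifferentiableAt ℝ g x) (b : Fin n) :
    pd (fun y => f y * g y) b x = f x * pd g b x + g x * pd f b x := by
  simp [pd, fderiv_fun_mul hf hg]

lemma pd_sum {ι : Type*} (s : Finset ι) (f : ι → Pt n → ℝ) {x : Pt n}
    (hf : ∀ i ∈ s, DifferentiableAt ℝ (f i) x) (b : Fin n) :
    pd (fun y => ∑ i ∈ s, f i y) b x = ∑ i ∈ s, pd (f i) b x := by
  simp [pd, fderiv_fun_sum hf]

lemma pd_smooth {f : Pt n → ℝ} (hf : ContDiff ℝ (⊤ : ℕ∞) f) (b : Fin n) : ContDiff ℝ (⊤ : ℕ∞) (pd f b) :=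
  (hf.fderiv_right (by simp)).clm_apply contDiff_const

lemma pd_comm {f : Pt n → ℝ} (hf : ContDiff ℝ (⊤ : ℕ∞) f) (a c : Fin n) (x : Pt n) :
    pd (fun y => pd f a y) c x = pd (fun y => pd f c y) a x := by
  have hf' : ContDiff ℝ (⊤ : ℕ∞) (fderiv ℝ f) := hf.fderiv_right (by simp)
  have h1 : ∀ v w : Fin n → ℝ,
      fderiv ℝ (fun y => fderiv ℝ f y v) x w = fderiv ℝ (fderiv ℝ f) x w v := by
    intro v w
    rw [fderiv_clm_apply (hf'.differentiable (by simp) x) (differentiableAt_const v)]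
    simp
  show fderiv ℝ (fun y => fderiv ℝ f y (Pi.single a 1)) x (Pi.single c 1)
      = fderiv ℝ (fun y => fderiv ℝ f y (Pi.single c 1)) x (Pi.single a 1)
  rw [h1, h1]
  exact second_derivative_symmetric (fun y => (hf.differentiable (by simp) y).hasFDerivAt)
    ((hf'.differentiable (by simp) x).hasFDerivAt) _ _

lemma smooth_nabla {Γ : Chr n} {X Y : VF n} (hΓ : SmoothChr Γ) (hX : SmoothVF X)
    (hY : SmoothVF Y) : SmoothVF (nabla Γ X Y) := by
  intro a
  exact (ContDiff.sum fun b _ => (hX b).mul (pd_smooth (hY a) b)).add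
    (ContDiff.sum fun b _ => ContDiff.sum fun c _ => ((hΓ a b c).mul (hX b)).mul (hY c))

lemma smooth_symProd {Γ : Chr n} {X Y : VF n} (hΓ : SmoothChr Γ) (hX : SmoothVF X)
    (hY : SmoothVF Y) : SmoothVF (symProd Γ X Y) := fun a =>
  (smooth_nabla hΓ hX hY a).add (smooth_nabla hΓ hY hX a)

lemma smooth_LC {G Ginv : Pt n → Matrix (Fin n) (Fin n) ℝ} (hG : SmoothMat G)
    (hGinv : SmoothMat Ginv) : SmoothChr (leviCivita G Ginv) := by
  intro a b c
  exact contDiff_const.mul (ContDiff.sum fun d _ => (hGinv a d).mul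
    (((pd_smooth (hG d b) c).add (pd_smooth (hG d c) b)).sub (pd_smooth (hG b c) d)))

lemma smooth_gradV {Ginv : Pt n → Matrix (Fin n) (Fin n) ℝ} {f : Pt n → ℝ}
    (hGinv : SmoothMat Ginv) (hf : ContDiff ℝ (⊤ : ℕ∞) f) : SmoothVF (gradV Ginv f) := fun a =>
  ContDiff.sum fun b _ => (hGinv a b).mul (pd_smooth hf b)

/-- pairing of two vector fields by the metric -/
def pr (G : Pt n → Matrix (Fin n) (Fin n) ℝ) (U Z : VF n) : Pt n → ℝ :=
  fun x => ∑ a, ∑ b, G x a b * U x a * Z x b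

lemma smooth_pr {G : Pt n → Matrix (Fin n) (Fin n) ℝ} {U Z : VF n} (hG : SmoothMat G)
    (hU : SmoothVF U) (hZ : SmoothVF Z) : ContDiff ℝ (⊤ : ℕ∞) (pr G U Z) :=
  ContDiff.sum fun a _ => ContDiff.sum fun b _ => ((hG a b).mul (hU a)).mul (hZ b)

lemma GGinv {G Ginv : Pt n → Matrix (Fin n) (Fin n) ℝ} (hpair : MetricPair G Ginv)
    (x : Pt n) (a c : Fin n) : ∑ b, G x a b * Ginv x b c = if a = c then 1 else 0 := by
  have := congrArg (fun M => M a c) (hpair.2.1 x)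
  simpa [Matrix.mul_apply, Matrix.one_apply] using this

lemma Gsymm {G Ginv : Pt n → Matrix (Fin n) (Fin n) ℝ} (hpair : MetricPair G Ginv)
    (x : Pt n) (a b : Fin n) : G x a b = G x b a := ((hpair.1 x).apply a b).symm

end IsomAux
namespace IsomAux
open Finset
variable {n : ℕ} {G Ginv : Pt n → Matrix (Fin n) (Fin n) ℝ}

lemma pairv_symm (hpair : MetricPair G Ginv) (x : Pt n) (v w : Fin n → ℝ) :
    ∑ a, ∑ b, G x a b * v a * w b = ∑ a, ∑ b, G x a b * w a * v b := by
  rw [Finset.sum_comm]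
  exact Finset.sum_congr rfl fun b _ => Finset.sum_congr rfl fun a _ => by
    rw [Gsymm hpair x b a]; ring

lemma pd_GGinv (hG : SmoothMat G) (hGinv : SmoothMat Ginv) (hpair : MetricPair G Ginv)
    (x : Pt n) (a e c : Fin n) :
    ∑ b, G x a b * pd (fun y => Ginv y b e) c x
      = - ∑ b, Ginv x b e * pd (fun y => G y a b) c x := by
  have hconst : (fun y => ∑ b, G y a b * Ginv y b e) = (fun _ => if a = e then (1:ℝ) else 0) :=
    funext fun y => GGinv hpair y a e
  have h0 : pd (fun y => ∑ b, G y a b * Ginv y b e) c x = 0 := by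
    rw [hconst]; exact pd_const _ _ _
  rw [pd_sum _ (fun b y => G y a b * Ginv y b e) (fun b _ => ((hG a b).differentiable (by simp) x).mul
    ((hGinv b e).differentiable (by simp) x)) c] at h0
  have h1 : ∀ b : Fin n, pd (fun y => G y a b * Ginv y b e) c x
      = G x a b * pd (fun y => Ginv y b e) c x + Ginv x b e * pd (fun y => G y a b) c x :=
    fun b => pd_mul ((hG a b).differentiable (by simp) x) ((hGinv b e).differentiable (by simp) x) c
  rw [Finset.sum_congr rfl fun b _ => h1 b, Finset.sum_add_distrib] at h0
  linarith

lemma contrG (hpair : MetricPair G Ginv) (x : Pt n) (e b c : Fin n) :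
    ∑ d, G x e d * leviCivita G Ginv x d b c
      = (1/2) * (pd (fun y => G y e b) c x + pd (fun y => G y e c) b x
          - pd (fun y => G y b c) e x) := by
  set T : Fin n → ℝ := fun f => pd (fun y => G y f b) c x + pd (fun y => G y f c) b x
      - pd (fun y => G y b c) f x with hT
  calc ∑ d, G x e d * leviCivita G Ginv x d b c
      = ∑ d, ∑ f, (1/2) * (G x e d * Ginv x d f * T f) := by
        refine Finset.sum_congr rfl fun d _ => ?_
        rw [leviCivita]
        simp only [Finset.mul_sum]
        exact Finset.sum_congr rfl fun f _ => by rw [hT]; ring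
    _ = ∑ f, ∑ d, (1/2) * (G x e d * Ginv x d f * T f) := Finset.sum_comm
    _ = ∑ f, (1/2) * ((∑ d, G x e d * Ginv x d f) * T f) := by
        refine Finset.sum_congr rfl fun f _ => ?_
        rw [Finset.sum_mul, Finset.mul_sum]
    _ = ∑ f, (1/2) * ((if e = f then (1:ℝ) else 0) * T f) := by
        exact Finset.sum_congr rfl fun f _ => by rw [GGinv hpair x e f]
    _ = (1/2) * T e := by
        rw [Finset.sum_congr rfl (fun f _ => by
          rw [show (1/2 : ℝ) * ((if e = f then (1:ℝ) else 0) * T f)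
            = if e = f then (1/2) * T f else 0 from by split <;> ring])]
        simp

lemma pdG_eq (hG : SmoothMat G) (hGinv : SmoothMat Ginv) (hpair : MetricPair G Ginv)
    (x : Pt n) (a b c : Fin n) :
    pd (fun y => G y a b) c x
      = (∑ d, G x a d * leviCivita G Ginv x d c b)
        + ∑ d, G x b d * leviCivita G Ginv x d c a := by
  rw [contrG hpair x a c b, contrG hpair x b c a]
  have hsf : ∀ p q : Fin n, (fun y => G y p q) = (fun y => G y q p) :=
    fun p q => funext fun y => Gsymm hpair y p q
  rw [show (fun y => G y a c) = (fun y => G y c a) from hsf a c,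
      show (fun y => G y b c) = (fun y => G y c b) from hsf b c,
      show (fun y => G y b a) = (fun y => G y a b) from hsf b a]
  ring

lemma pd_pr {U Z : VF n} (hG : SmoothMat G) (hU : SmoothVF U) (hZ : SmoothVF Z)
    (c : Fin n) (x : Pt n) :
    pd (pr G U Z) c x = ∑ a, ∑ b,
      (pd (fun y => G y a b) c x * U x a * Z x b
        + G x a b * pd (fun y => U y a) c x * Z x b
        + G x a b * U x a * pd (fun y => Z y b) c x) := by
  have d1 : ∀ a b : Fin n, DifferentiableAt ℝ (fun y => G y a b * U y a * Z y b) x :=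
    fun a b => (((hG a b).differentiable (by simp) x).mul ((hU a).differentiable (by simp) x)).mul
      ((hZ b).differentiable (by simp) x)
  rw [show pr G U Z = fun y => ∑ a, ∑ b, G y a b * U y a * Z y b from rfl]
  rw [pd_sum _ _ (fun a _ => DifferentiableAt.fun_sum fun b _ => d1 a b) c]
  refine Finset.sum_congr rfl fun a _ => ?_
  rw [pd_sum _ _ (fun b _ => d1 a b) c]
  refine Finset.sum_congr rfl fun b _ => ?_
  rw [pd_mul (f := fun y => G y a b * U y a) (((hG a b).differentiable (by simp) x).mul ((hU a).differentiable (by simp) x))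
    ((hZ b).differentiable (by simp) x) c,
    pd_mul ((hG a b).differentiable (by simp) x) ((hU a).differentiable (by simp) x) c]
  ring
end IsomAux
namespace IsomAux
open Finset
variable {n : ℕ} {G Ginv : Pt n → Matrix (Fin n) (Fin n) ℝ}

lemma sum2_swap (h : Fin n → Fin n → ℝ) : ∑ a, ∑ b, h a b = ∑ a, ∑ b, h b a :=
  Finset.sum_comm

lemma sum_rot3 (g : Fin n → Fin n → Fin n → ℝ) :
    ∑ a, ∑ b, ∑ c, g a b c = ∑ c, ∑ a, ∑ b, g a b c := by
  calc ∑ a, ∑ b, ∑ c, g a b c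
      = ∑ a, ∑ c, ∑ b, g a b c := Finset.sum_congr rfl fun a _ => Finset.sum_comm
    _ = ∑ c, ∑ a, ∑ b, g a b c := Finset.sum_comm

lemma sum3_swap13 (h : Fin n → Fin n → Fin n → ℝ) :
    ∑ b, ∑ c, ∑ d, h b c d = ∑ b, ∑ c, ∑ d, h d c b := by
  calc ∑ b, ∑ c, ∑ d, h b c d
      = ∑ b, ∑ d, ∑ c, h b c d := Finset.sum_congr rfl fun b _ => Finset.sum_comm
    _ = ∑ b, ∑ d, ∑ c, h d c b := sum2_swap (fun b d => ∑ c, h b c d)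
    _ = ∑ b, ∑ c, ∑ d, h d c b := Finset.sum_congr rfl fun b _ => Finset.sum_comm

lemma sum4_swap14 (f : Fin n → Fin n → Fin n → Fin n → ℝ) :
    ∑ a, ∑ b, ∑ c, ∑ d, f a b c d = ∑ a, ∑ b, ∑ c, ∑ d, f d b c a := by
  calc ∑ a, ∑ b, ∑ c, ∑ d, f a b c d
      = ∑ a, ∑ d, ∑ b, ∑ c, f a b c d :=
        Finset.sum_congr rfl fun a _ => sum_rot3 (fun b c d => f a b c d)
    _ = ∑ a, ∑ d, ∑ b, ∑ c, f d b c a := sum2_swap (fun a d => ∑ b, ∑ c, f a b c d)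
    _ = ∑ a, ∑ b, ∑ c, ∑ d, f d b c a :=
        Finset.sum_congr rfl fun a _ => (sum_rot3 (fun b c d => f d b c a)).symm

lemma sum4_swap24 (f : Fin n → Fin n → Fin n → Fin n → ℝ) :
    ∑ a, ∑ b, ∑ c, ∑ d, f a b c d = ∑ a, ∑ b, ∑ c, ∑ d, f a d c b :=
  Finset.sum_congr rfl fun a _ => sum3_swap13 (fun b c d => f a b c d)

lemma sum4_rot3 (f : Fin n → Fin n → Fin n → Fin n → ℝ) :
    ∑ a, ∑ b, ∑ c, ∑ d, f a b c d = ∑ c, ∑ a, ∑ b, ∑ d, f a b c d :=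
  sum_rot3 (fun a b c => ∑ d, f a b c d)

end IsomAux
namespace IsomAux
open Finset
variable {n : ℕ} {G Ginv : Pt n → Matrix (Fin n) (Fin n) ℝ}

/-- Metric compatibility of the Levi-Civita connection, in coordinates. -/
lemma compat (hG : SmoothMat G) (hGinv : SmoothMat Ginv) (hpair : MetricPair G Ginv)
    {X U Z : VF n} (hX : SmoothVF X) (hU : SmoothVF U) (hZ : SmoothVF Z) (x : Pt n) :
    dirDer X (pr G U Z) x
      = (∑ a, ∑ b, G x a b * nabla (leviCivita G Ginv) X U x a * Z x b)
        + ∑ a, ∑ b, G x a b * U x a * nabla (leviCivita G Ginv) X Z x b := by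
  set Γ : Chr n := leviCivita G Ginv with hΓ
  -- canonical pieces
  set C1 : ℝ := ∑ c, ∑ a, ∑ b, X x c * G x a b * pd (fun y => U y a) c x * Z x b with hC1def
  set C2 : ℝ := ∑ c, ∑ a, ∑ b, X x c * G x a b * U x a * pd (fun y => Z y b) c x with hC2def
  set C3 : ℝ := ∑ c, ∑ a, ∑ b, ∑ d, X x c * U x a * Z x b * (G x a d * Γ x d c b) with hC3def
  set C4 : ℝ := ∑ c, ∑ a, ∑ b, ∑ d, X x c * U x a * Z x b * (G x b d * Γ x d c a) with hC4def
  -- LHS decomposition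
  have hA : dirDer X (pr G U Z) x
      = (∑ c, ∑ a, ∑ b, X x c * pd (fun y => G y a b) c x * U x a * Z x b) + (C1 + C2) := by
    show (∑ c, X x c * pd (pr G U Z) c x) = _
    have : ∀ c : Fin n, X x c * pd (pr G U Z) c x
        = ∑ a, ∑ b, (X x c * pd (fun y => G y a b) c x * U x a * Z x b
            + (X x c * G x a b * pd (fun y => U y a) c x * Z x b
              + X x c * G x a b * U x a * pd (fun y => Z y b) c x)) := by
      intro c
      rw [pd_pr hG hU hZ c x, Finset.mul_sum]
      refine Finset.sum_congr rfl fun a _ => ?_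
      rw [Finset.mul_sum]
      exact Finset.sum_congr rfl fun b _ => by ring
    rw [Finset.sum_congr rfl fun c _ => this c]
    simp only [Finset.sum_add_distrib]
    rfl
  have hB : (∑ c, ∑ a, ∑ b, X x c * pd (fun y => G y a b) c x * U x a * Z x b) = C3 + C4 := by
    have : ∀ c a b : Fin n, X x c * pd (fun y => G y a b) c x * U x a * Z x b
        = (∑ d, X x c * U x a * Z x b * (G x a d * Γ x d c b))
          + ∑ d, X x c * U x a * Z x b * (G x b d * Γ x d c a) := by
      intro c a b
      rw [pdG_eq hG hGinv hpair x a b c, mul_add, add_mul, add_mul]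
      congr 1 <;>
      · rw [Finset.mul_sum, Finset.sum_mul, Finset.sum_mul]
        exact Finset.sum_congr rfl fun d _ => by ring
    rw [Finset.sum_congr rfl fun c _ => Finset.sum_congr rfl fun a _ =>
      Finset.sum_congr rfl fun b _ => this c a b]
    simp only [Finset.sum_add_distrib]
    rfl
  -- RHS decomposition
  have hR1 : (∑ a, ∑ b, G x a b * nabla Γ X U x a * Z x b)
      = (∑ a, ∑ b, ∑ c, G x a b * (X x c * pd (fun y => U y a) c x) * Z x b)
        + ∑ a, ∑ b, ∑ c, ∑ d, G x a b * (Γ x a c d * X x c * U x d) * Z x b := by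
    have : ∀ a b : Fin n, G x a b * nabla Γ X U x a * Z x b
        = (∑ c, G x a b * (X x c * pd (fun y => U y a) c x) * Z x b)
          + ∑ c, ∑ d, G x a b * (Γ x a c d * X x c * U x d) * Z x b := by
      intro a b
      show G x a b * ((∑ c, X x c * pd (fun y => U y a) c x)
          + ∑ c, ∑ d, Γ x a c d * X x c * U x d) * Z x b = _
      rw [mul_add, add_mul]
      congr 1
      · rw [Finset.mul_sum, Finset.sum_mul]
      · rw [Finset.mul_sum, Finset.sum_mul]
        refine Finset.sum_congr rfl fun c _ => ?_
        rw [Finset.mul_sum, Finset.sum_mul]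
    rw [Finset.sum_congr rfl fun a _ => Finset.sum_congr rfl fun b _ => this a b]
    simp only [Finset.sum_add_distrib]
  have hR2 : (∑ a, ∑ b, G x a b * U x a * nabla Γ X Z x b)
      = (∑ a, ∑ b, ∑ c, G x a b * U x a * (X x c * pd (fun y => Z y b) c x))
        + ∑ a, ∑ b, ∑ c, ∑ d, G x a b * U x a * (Γ x b c d * X x c * Z x d) := by
    have : ∀ a b : Fin n, G x a b * U x a * nabla Γ X Z x b
        = (∑ c, G x a b * U x a * (X x c * pd (fun y => Z y b) c x))
          + ∑ c, ∑ d, G x a b * U x a * (Γ x b c d * X x c * Z x d) := by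
      intro a b
      show G x a b * U x a * ((∑ c, X x c * pd (fun y => Z y b) c x)
          + ∑ c, ∑ d, Γ x b c d * X x c * Z x d) = _
      rw [mul_add]
      congr 1
      · rw [Finset.mul_sum]
      · rw [Finset.mul_sum]
        exact Finset.sum_congr rfl fun c _ => by rw [Finset.mul_sum]
    rw [Finset.sum_congr rfl fun a _ => Finset.sum_congr rfl fun b _ => this a b]
    simp only [Finset.sum_add_distrib]
  -- match the four pieces
  have e1 : (∑ a, ∑ b, ∑ c, G x a b * (X x c * pd (fun y => U y a) c x) * Z x b) = C1 := by
    rw [sum_rot3 (fun a b c => G x a b * (X x c * pd (fun y => U y a) c x) * Z x b)]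
    exact Finset.sum_congr rfl fun c _ => Finset.sum_congr rfl fun a _ =>
      Finset.sum_congr rfl fun b _ => by ring
  have e2 : (∑ a, ∑ b, ∑ c, G x a b * U x a * (X x c * pd (fun y => Z y b) c x)) = C2 := by
    rw [sum_rot3 (fun a b c => G x a b * U x a * (X x c * pd (fun y => Z y b) c x))]
    exact Finset.sum_congr rfl fun c _ => Finset.sum_congr rfl fun a _ =>
      Finset.sum_congr rfl fun b _ => by ring
  have e3 : (∑ a, ∑ b, ∑ c, ∑ d, G x a b * U x a * (Γ x b c d * X x c * Z x d)) = C3 := by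
    rw [sum4_swap24 (fun a b c d => G x a b * U x a * (Γ x b c d * X x c * Z x d))]
    rw [sum4_rot3 (fun a b c d => G x a d * U x a * (Γ x d c b * X x c * Z x b))]
    exact Finset.sum_congr rfl fun c _ => Finset.sum_congr rfl fun a _ =>
      Finset.sum_congr rfl fun b _ => Finset.sum_congr rfl fun d _ => by ring
  have e4 : (∑ a, ∑ b, ∑ c, ∑ d, G x a b * (Γ x a c d * X x c * U x d) * Z x b) = C4 := by
    rw [sum4_swap14 (fun a b c d => G x a b * (Γ x a c d * X x c * U x d) * Z x b)]
    rw [sum4_rot3 (fun a b c d => G x d b * (Γ x d c a * X x c * U x a) * Z x b)]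
    refine Finset.sum_congr rfl fun c _ => Finset.sum_congr rfl fun a _ =>
      Finset.sum_congr rfl fun b _ => Finset.sum_congr rfl fun d _ => ?_
    rw [Gsymm hpair x d b]; ring
  rw [hA, hB, hR1, hR2, e1, e2, e3, e4]
  ring

end IsomAux
namespace IsomAux
open Finset
variable {n : ℕ} {G Ginv : Pt n → Matrix (Fin n) (Fin n) ℝ}

lemma sum4_rotinner (f : Fin n → Fin n → Fin n → Fin n → ℝ) :
    ∑ a, ∑ b, ∑ c, ∑ e, f a b c e = ∑ a, ∑ c, ∑ e, ∑ b, f a b c e :=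
  Finset.sum_congr rfl fun a _ => (sum_rot3 (fun c e b => f a b c e)).symm

lemma sum3_add (A B : Fin n → Fin n → Fin n → ℝ) :
    ((∑ a, ∑ c, ∑ d, A a c d) + ∑ a, ∑ c, ∑ d, B a c d)
      = ∑ a, ∑ c, ∑ d, (A a c d + B a c d) := by
  simp only [Finset.sum_add_distrib]

lemma grad_pd {f : Pt n → ℝ} (hGinv : SmoothMat Ginv) (hf : ContDiff ℝ (⊤ : ℕ∞) f)
    (b c : Fin n) (x : Pt n) :
    pd (fun y => gradV Ginv f y b) c x
      = ∑ e, (Ginv x b e * pd (fun y => pd f e y) c x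
          + pd f e x * pd (fun y => Ginv y b e) c x) := by
  rw [show (fun y => gradV Ginv f y b) = (fun y => ∑ e, Ginv y b e * pd f e y) from rfl]
  rw [pd_sum _ (fun e y => Ginv y b e * pd f e y) (fun e _ => ((hGinv b e).differentiable (by simp) x).mul
    ((pd_smooth hf e).differentiable (by simp) x)) c]
  refine Finset.sum_congr rfl fun e _ => ?_
  rw [pd_mul ((hGinv b e).differentiable (by simp) x)
    ((pd_smooth hf e).differentiable (by simp) x) c]

/-- Symmetry of the Hessian of `f` w.r.t. the Levi-Civita connection. -/
lemma hess_sym (hG : SmoothMat G) (hGinv : SmoothMat Ginv) (hpair : MetricPair G Ginv)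
    {f : Pt n → ℝ} (hf : ContDiff ℝ (⊤ : ℕ∞) f) (U Z : VF n) (x : Pt n) :
    (∑ a, ∑ b, G x a b * U x a * nabla (leviCivita G Ginv) Z (gradV Ginv f) x b)
      = ∑ a, ∑ b, G x a b * Z x a * nabla (leviCivita G Ginv) U (gradV Ginv f) x b := by
  set X : VF n := gradV Ginv f with hX
  set K : (Fin n → ℝ) → (Fin n → ℝ) → ℝ := fun v w =>
    (∑ a, ∑ c, v a * w c * pd (fun y => pd f a y) c x)
      + (1/2) * ∑ a, ∑ c, ∑ d, v a * w c * X x d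
          * (pd (fun y => G y a c) d x - pd (fun y => G y a d) c x
              - pd (fun y => G y c d) a x) with hK
  have key : ∀ v w : Fin n → ℝ,
      (∑ a, ∑ b, G x a b * v a * ((∑ c, w c * pd (fun y => X y b) c x)
          + ∑ c, ∑ d, leviCivita G Ginv x b c d * w c * X x d)) = K v w := by
    intro v w
    have split : ∀ a b : Fin n, G x a b * v a * ((∑ c, w c * pd (fun y => X y b) c x)
          + ∑ c, ∑ d, leviCivita G Ginv x b c d * w c * X x d)
        = (∑ c, G x a b * v a * (w c * pd (fun y => X y b) c x))
          + ∑ c, ∑ d, G x a b * v a * (leviCivita G Ginv x b c d * w c * X x d) := by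
      intro a b
      rw [mul_add]
      congr 1
      · rw [Finset.mul_sum]
      · rw [Finset.mul_sum]
        exact Finset.sum_congr rfl fun c _ => by rw [Finset.mul_sum]
    rw [Finset.sum_congr rfl fun a _ => Finset.sum_congr rfl fun b _ => split a b]
    simp only [Finset.sum_add_distrib]
    -- expand the derivative of the gradient in the first piece
    have e1 : ∀ a b c : Fin n, G x a b * v a * (w c * pd (fun y => X y b) c x)
        = (∑ e, G x a b * v a * w c * (Ginv x b e * pd (fun y => pd f e y) c x))
          + ∑ e, G x a b * v a * w c * (pd f e x * pd (fun y => Ginv y b e) c x) := by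
      intro a b c
      rw [hX, grad_pd hGinv hf b c x, Finset.mul_sum, Finset.mul_sum,
        ← Finset.sum_add_distrib]
      exact Finset.sum_congr rfl fun e _ => by ring
    have hsplit2 : (∑ a, ∑ b, ∑ c, G x a b * v a * (w c * pd (fun y => X y b) c x))
        = (∑ a, ∑ b, ∑ c, ∑ e, G x a b * v a * w c * (Ginv x b e * pd (fun y => pd f e y) c x))
          + ∑ a, ∑ b, ∑ c, ∑ e, G x a b * v a * w c
              * (pd f e x * pd (fun y => Ginv y b e) c x) := by
      rw [Finset.sum_congr rfl fun a _ => Finset.sum_congr rfl fun b _ =>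
        Finset.sum_congr rfl fun c _ => e1 a b c]
      simp only [Finset.sum_add_distrib]
    -- P1a : second-derivative part
    have hP1a : (∑ a, ∑ b, ∑ c, ∑ e, G x a b * v a * w c
          * (Ginv x b e * pd (fun y => pd f e y) c x))
        = ∑ a, ∑ c, v a * w c * pd (fun y => pd f a y) c x := by
      rw [sum4_rotinner (fun a b c e =>
        G x a b * v a * w c * (Ginv x b e * pd (fun y => pd f e y) c x))]
      refine Finset.sum_congr rfl fun a _ => ?_
      have inner : ∀ c : Fin n, (∑ e, ∑ b, G x a b * v a * w c
            * (Ginv x b e * pd (fun y => pd f e y) c x))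
          = ∑ e, if a = e then v a * w c * pd (fun y => pd f e y) c x else 0 := by
        intro c
        refine Finset.sum_congr rfl fun e _ => ?_
        have : (∑ b, G x a b * v a * w c * (Ginv x b e * pd (fun y => pd f e y) c x))
            = (∑ b, G x a b * Ginv x b e) * (v a * w c * pd (fun y => pd f e y) c x) := by
          rw [Finset.sum_mul]
          exact Finset.sum_congr rfl fun b _ => by ring
        rw [this, GGinv hpair x a e]
        split <;> ring
      rw [show (∑ c, ∑ e, ∑ b, G x a b * v a * w c
          * (Ginv x b e * pd (fun y => pd f e y) c x))
        = ∑ c, ∑ e, (if a = e then v a * w c * pd (fun y => pd f e y) c x else 0) from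
          Finset.sum_congr rfl fun c _ => inner c]
      exact Finset.sum_congr rfl fun c _ => by simp
    -- P1b : derivative-of-inverse part
    have hP1b : (∑ a, ∑ b, ∑ c, ∑ e, G x a b * v a * w c
          * (pd f e x * pd (fun y => Ginv y b e) c x))
        = ∑ a, ∑ c, ∑ d, (-(v a * w c * pd (fun y => G y a d) c x * X x d)) := by
      rw [sum4_rotinner (fun a b c e =>
        G x a b * v a * w c * (pd f e x * pd (fun y => Ginv y b e) c x))]
      refine Finset.sum_congr rfl fun a _ => Finset.sum_congr rfl fun c _ => ?_
      have L : ∀ e : Fin n, (∑ b, G x a b * v a * w c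
            * (pd f e x * pd (fun y => Ginv y b e) c x))
          = ∑ b, -(v a * w c * pd f e x * Ginv x b e * pd (fun y => G y a b) c x) := by
        intro e
        have l1 : (∑ b, G x a b * v a * w c * (pd f e x * pd (fun y => Ginv y b e) c x))
            = (v a * w c * pd f e x) * ∑ b, G x a b * pd (fun y => Ginv y b e) c x := by
          rw [Finset.mul_sum]
          exact Finset.sum_congr rfl fun b _ => by ring
        rw [l1, pd_GGinv hG hGinv hpair x a e c, mul_neg, Finset.mul_sum,
          ← Finset.sum_neg_distrib]
        exact Finset.sum_congr rfl fun b _ => by ring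
      rw [Finset.sum_congr rfl fun e _ => L e, Finset.sum_comm]
      refine Finset.sum_congr rfl fun d _ => ?_
      rw [show X x d = ∑ e, Ginv x d e * pd f e x from rfl, Finset.mul_sum,
        ← Finset.sum_neg_distrib]
      exact Finset.sum_congr rfl fun e _ => by ring
    -- P2 : Christoffel part, contracted
    have hP2 : (∑ a, ∑ b, ∑ c, ∑ d, G x a b * v a * (leviCivita G Ginv x b c d * w c * X x d))
        = ∑ a, ∑ c, ∑ d, (v a * w c * X x d) * ((1/2) * (pd (fun y => G y a c) d x
            + pd (fun y => G y a d) c x - pd (fun y => G y c d) a x)) := by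
      rw [sum4_rotinner (fun a b c d =>
        G x a b * v a * (leviCivita G Ginv x b c d * w c * X x d))]
      refine Finset.sum_congr rfl fun a _ => Finset.sum_congr rfl fun c _ =>
        Finset.sum_congr rfl fun d _ => ?_
      have : (∑ b, G x a b * v a * (leviCivita G Ginv x b c d * w c * X x d))
          = (v a * w c * X x d) * ∑ b, G x a b * leviCivita G Ginv x b c d := by
        rw [Finset.mul_sum]
        exact Finset.sum_congr rfl fun b _ => by ring
      rw [this, contrG hpair x a c d]
    rw [hsplit2, hP1a, hP1b, hP2, hK]
    rw [add_assoc]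
    congr 1
    rw [sum3_add, Finset.mul_sum]
    refine Finset.sum_congr rfl fun a _ => ?_
    rw [Finset.mul_sum]
    refine Finset.sum_congr rfl fun c _ => ?_
    rw [Finset.mul_sum]
    exact Finset.sum_congr rfl fun d _ => by ring
  have symK : ∀ v w : Fin n → ℝ, K v w = K w v := by
    intro v w
    have p1 : (∑ a, ∑ c, v a * w c * pd (fun y => pd f a y) c x)
        = ∑ a, ∑ c, w a * v c * pd (fun y => pd f a y) c x := by
      rw [sum2_swap (fun a c => v a * w c * pd (fun y => pd f a y) c x)]
      exact Finset.sum_congr rfl fun a _ => Finset.sum_congr rfl fun c _ => by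
        rw [pd_comm hf c a x]; ring
    have p2 : (∑ a, ∑ c, ∑ d, v a * w c * X x d
          * (pd (fun y => G y a c) d x - pd (fun y => G y a d) c x
              - pd (fun y => G y c d) a x))
        = ∑ a, ∑ c, ∑ d, w a * v c * X x d
          * (pd (fun y => G y a c) d x - pd (fun y => G y a d) c x
              - pd (fun y => G y c d) a x) := by
      rw [sum2_swap (fun a c => ∑ d, v a * w c * X x d
          * (pd (fun y => G y a c) d x - pd (fun y => G y a d) c x
              - pd (fun y => G y c d) a x))]
      refine Finset.sum_congr rfl fun a _ => Finset.sum_congr rfl fun c _ =>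
        Finset.sum_congr rfl fun d _ => ?_
      rw [show (fun y => G y c a) = (fun y => G y a c) from
        funext fun y => Gsymm hpair y c a]
      ring
    rw [hK]
    simp only []
    rw [p1, p2]
  exact (key (U x) (Z x)).trans ((symK (U x) (Z x)).trans (key (Z x) (U x)).symm)

end IsomAux
namespace IsomAux
open Finset
variable {n : ℕ} {G Ginv : Pt n → Matrix (Fin n) (Fin n) ℝ}

lemma pair_grad (hpair : MetricPair G Ginv) (f : Pt n → ℝ) (x : Pt n) (u : Fin n → ℝ) :
    (∑ a, ∑ b, G x a b * u a * gradV Ginv f x b) = fderiv ℝ f x u := by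
  have step : ∀ a : Fin n, (∑ b, G x a b * u a * gradV Ginv f x b)
      = ∑ c, (if a = c then (1:ℝ) else 0) * (u a * pd f c x) := by
    intro a
    have e1 : ∀ b : Fin n, G x a b * u a * gradV Ginv f x b
        = ∑ c, G x a b * Ginv x b c * (u a * pd f c x) := by
      intro b
      rw [show gradV Ginv f x b = ∑ c, Ginv x b c * pd f c x from rfl, Finset.mul_sum]
      exact Finset.sum_congr rfl fun c _ => by ring
    rw [Finset.sum_congr rfl fun b _ => e1 b, Finset.sum_comm]
    refine Finset.sum_congr rfl fun c _ => ?_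
    rw [← GGinv hpair x a c, Finset.sum_mul]
  rw [Finset.sum_congr rfl fun a _ => step a]
  have coll : ∀ a : Fin n, (∑ c, (if a = c then (1:ℝ) else 0) * (u a * pd f c x))
      = u a * pd f a x := by
    intro a
    rw [Finset.sum_congr rfl (fun c _ => by
      rw [show (if a = c then (1:ℝ) else 0) * (u a * pd f c x)
        = if a = c then u a * pd f c x else 0 from by split <;> ring])]
    simp
  rw [Finset.sum_congr rfl fun a _ => coll a]
  have : (∑ a, u a * pd f a x) = dirDer (fun _ => u) f x := rfl
  rw [this, dirDer_fderiv]

/-- The fundamental identity `G(U, ⟨X:Z⟩) = L_X G(U,Z) − G(∇_X U, Z) + G(∇_U X, Z)`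
for a gradient vector field `X = grad f`. -/
lemma star_id (hG : SmoothMat G) (hGinv : SmoothMat Ginv) (hpair : MetricPair G Ginv)
    {f : Pt n → ℝ} (hf : ContDiff ℝ (⊤ : ℕ∞) f) {U Z : VF n} (hU : SmoothVF U) (hZ : SmoothVF Z)
    (x : Pt n) :
    (∑ a, ∑ b, G x a b * U x a * symProd (leviCivita G Ginv) (gradV Ginv f) Z x b)
      = dirDer (gradV Ginv f) (pr G U Z) x
        - (∑ a, ∑ b, G x a b * nabla (leviCivita G Ginv) (gradV Ginv f) U x a * Z x b)
        + ∑ a, ∑ b, G x a b * nabla (leviCivita G Ginv) U (gradV Ginv f) x a * Z x b := by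
  have hsplit : (∑ a, ∑ b, G x a b * U x a * symProd (leviCivita G Ginv) (gradV Ginv f) Z x b)
      = (∑ a, ∑ b, G x a b * U x a * nabla (leviCivita G Ginv) (gradV Ginv f) Z x b)
        + ∑ a, ∑ b, G x a b * U x a * nabla (leviCivita G Ginv) Z (gradV Ginv f) x b := by
    rw [Finset.sum_congr rfl fun a _ => Finset.sum_congr rfl fun b _ => by
      rw [show symProd (leviCivita G Ginv) (gradV Ginv f) Z x b
        = nabla (leviCivita G Ginv) (gradV Ginv f) Z x b + nabla (leviCivita G Ginv) Z (gradV Ginv f) x b from rfl, mul_add]]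
    simp only [Finset.sum_add_distrib]
  have h1 := compat hG hGinv hpair (smooth_gradV hGinv hf) hU hZ x
  have h2 := hess_sym hG hGinv hpair hf U Z x
  have h3 := pairv_symm hpair x (Z x) (nabla (leviCivita G Ginv) U (gradV Ginv f) x)
  linarith

/-- Pushforward of a vector field along `ψ`. -/
def pushVF (ψ ψinv : Pt n → Pt n) (Z : VF n) : VF n :=
  fun z => fderiv ℝ ψ (ψinv z) (Z (ψinv z))

lemma pushVF_smooth {ψ ψinv : Pt n → Pt n} (hψ : ContDiff ℝ (⊤ : ℕ∞) ψ)
    (hψinv : ContDiff ℝ (⊤ : ℕ∞) ψinv) {Z : VF n} (hZ : SmoothVF Z) :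
    SmoothVF (pushVF ψ ψinv Z) := by
  have h1 : ContDiff ℝ (⊤ : ℕ∞) (fun z => fderiv ℝ ψ (ψinv z)) :=
    (hψ.fderiv_right (by simp)).comp hψinv
  have h2 : ContDiff ℝ (⊤ : ℕ∞) (fun z => Z (ψinv z)) := contDiff_pi.mpr fun b => (hZ b).comp hψinv
  intro a
  exact contDiff_pi.mp (h1.clm_apply h2) a

lemma pushVF_at {ψ ψinv : Pt n → Pt n} (hli : Function.LeftInverse ψinv ψ) (Z : VF n)
    (x : Pt n) : pushVF ψ ψinv Z (ψ x) = fderiv ℝ ψ x (Z x) := by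
  show fderiv ℝ ψ (ψinv (ψ x)) (Z (ψinv (ψ x))) = _
  rw [hli x]

lemma fderiv_comp_apply {ψ : Pt n → Pt n} {F : Pt n → ℝ} {x : Pt n}
    (hF : DifferentiableAt ℝ F (ψ x)) (hψ : DifferentiableAt ℝ ψ x) (v : Fin n → ℝ) :
    fderiv ℝ (fun y => F (ψ y)) x v = fderiv ℝ F (ψ x) (fderiv ℝ ψ x v) := by
  have := fderiv_comp x hF hψ
  simp only [Function.comp_def] at this
  rw [this]; rfl

end IsomAux
namespace IsomAux
open Finset

/-- The inductive step: the pairing transfer property is preserved by taking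
symmetric products with a gradient input vector field. -/
lemma step_lemma {n : ℕ} {G1 Ginv1 G2 Ginv2 : Pt n → Matrix (Fin n) (Fin n) ℝ}
    (hG1 : SmoothMat G1) (hGinv1 : SmoothMat Ginv1) (hpair1 : MetricPair G1 Ginv1)
    (hG2 : SmoothMat G2) (hGinv2 : SmoothMat Ginv2) (hpair2 : MetricPair G2 Ginv2)
    {ψ ψinv : Pt n → Pt n} (hψ : ContDiff ℝ (⊤ : ℕ∞) ψ) (hψinv : ContDiff ℝ (⊤ : ℕ∞) ψinv)
    (hli : Function.LeftInverse ψinv ψ)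
    (hconn : ∀ X Y : VF n, SmoothVF X → SmoothVF Y → ∀ y,
      fderiv ℝ ψ (ψinv y) (nabla (leviCivita G1 Ginv1) X Y (ψinv y))
        = nabla (leviCivita G2 Ginv2)
            (fun z => fderiv ℝ ψ (ψinv z) (X (ψinv z)))
            (fun z => fderiv ℝ ψ (ψinv z) (Y (ψinv z))) y)
    {g1 g2 : VF n} (hg1s : SmoothVF g1)
    (hpushg : pushVF ψ ψinv g1 = g2)
    {f1 f2 : Pt n → ℝ} (hf1 : ContDiff ℝ (⊤ : ℕ∞) f1) (hf2 : ContDiff ℝ (⊤ : ℕ∞) f2)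
    (hgf1 : g1 = gradV Ginv1 f1) (hgf2 : g2 = gradV Ginv2 f2)
    {Z1 : VF n} (hZ1s : SmoothVF Z1)
    (hZpair : ∀ (x : Pt n) (u : Fin n → ℝ), (∑ a, ∑ b, G1 x a b * u a * Z1 x b)
        = ∑ a, ∑ b, G2 (ψ x) a b * fderiv ℝ ψ x u a * pushVF ψ ψinv Z1 (ψ x) b)
    (x : Pt n) (u : Fin n → ℝ) :
    (∑ a, ∑ b, G1 x a b * u a * symProd (leviCivita G1 Ginv1) g1 Z1 x b)
      = ∑ a, ∑ b, G2 (ψ x) a b * fderiv ℝ ψ x u a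
          * pushVF ψ ψinv (symProd (leviCivita G1 Ginv1) g1 Z1) (ψ x) b := by
  have hψd : Differentiable ℝ ψ := hψ.differentiable (by simp)
  have hZ2s : SmoothVF (pushVF ψ ψinv Z1) := pushVF_smooth hψ hψinv hZ1s
  have hU1s : SmoothVF (fun _ : Pt n => u) := fun a => contDiff_const
  have hU2s : SmoothVF (pushVF ψ ψinv (fun _ => u)) := pushVF_smooth hψ hψinv hU1s
  have hg2s : SmoothVF g2 := by rw [← hpushg]; exact pushVF_smooth hψ hψinv hg1s
  have castg : (fun z => fderiv ℝ ψ (ψinv z) (g1 (ψinv z))) = g2 := hpushg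
  have castu : (fun z => fderiv ℝ ψ (ψinv z) u) = pushVF ψ ψinv (fun _ => u) := rfl
  have castz : (fun z => fderiv ℝ ψ (ψinv z) (Z1 (ψinv z))) = pushVF ψ ψinv Z1 := rfl
  -- the four intertwining identities for `nabla`
  have hconn_g_U : fderiv ℝ ψ x (nabla (leviCivita G1 Ginv1) g1 (fun _ => u) x)
      = nabla (leviCivita G2 Ginv2) g2 (pushVF ψ ψinv (fun _ => u)) (ψ x) := by
    have h := hconn g1 (fun _ => u) hg1s hU1s (ψ x)
    rw [hli x, castg, castu] at h
    exact h
  have hconn_U_g : fderiv ℝ ψ x (nabla (leviCivita G1 Ginv1) (fun _ => u) g1 x)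
      = nabla (leviCivita G2 Ginv2) (pushVF ψ ψinv (fun _ => u)) g2 (ψ x) := by
    have h := hconn (fun _ => u) g1 hU1s hg1s (ψ x)
    rw [hli x, castg, castu] at h
    exact h
  have hconn_g_Z : fderiv ℝ ψ x (nabla (leviCivita G1 Ginv1) g1 Z1 x)
      = nabla (leviCivita G2 Ginv2) g2 (pushVF ψ ψinv Z1) (ψ x) := by
    have h := hconn g1 Z1 hg1s hZ1s (ψ x)
    rw [hli x, castg, castz] at h
    exact h
  have hconn_Z_g : fderiv ℝ ψ x (nabla (leviCivita G1 Ginv1) Z1 g1 x)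
      = nabla (leviCivita G2 Ginv2) (pushVF ψ ψinv Z1) g2 (ψ x) := by
    have h := hconn Z1 g1 hZ1s hg1s (ψ x)
    rw [hli x, castg, castz] at h
    exact h
  -- pushforward of the symmetric product
  have hpushSym : pushVF ψ ψinv (symProd (leviCivita G1 Ginv1) g1 Z1) (ψ x)
      = symProd (leviCivita G2 Ginv2) g2 (pushVF ψ ψinv Z1) (ψ x) := by
    rw [pushVF_at hli]
    have e : symProd (leviCivita G1 Ginv1) g1 Z1 x
        = nabla (leviCivita G1 Ginv1) g1 Z1 x + nabla (leviCivita G1 Ginv1) Z1 g1 x := rfl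
    rw [e, map_add, hconn_g_Z, hconn_Z_g]
    rfl
  -- transfer of the Lie derivative term
  have hdir : dirDer g1 (pr G1 (fun _ => u) Z1) x
      = dirDer g2 (pr G2 (pushVF ψ ψinv (fun _ => u)) (pushVF ψ ψinv Z1)) (ψ x) := by
    rw [dirDer_fderiv, dirDer_fderiv]
    have hFeq : pr G1 (fun _ => u) Z1
        = fun y => pr G2 (pushVF ψ ψinv (fun _ => u)) (pushVF ψ ψinv Z1) (ψ y) := by
      funext y
      have h := hZpair y u
      show (∑ a, ∑ b, G1 y a b * u a * Z1 y b) = _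
      rw [show pr G2 (pushVF ψ ψinv (fun _ => u)) (pushVF ψ ψinv Z1) (ψ y)
        = ∑ a, ∑ b, G2 (ψ y) a b * pushVF ψ ψinv (fun _ => u) (ψ y) a
            * pushVF ψ ψinv Z1 (ψ y) b from rfl]
      rw [pushVF_at hli]
      exact h
    rw [hFeq]
    rw [fderiv_comp_apply ((smooth_pr hG2 hU2s hZ2s).differentiable (by simp) (ψ x)) (hψd x)]
    rw [show fderiv ℝ ψ x (g1 x) = g2 (ψ x) from by rw [← hpushg, pushVF_at hli]]
  -- pairing transfer for the two nabla terms
  have hp1 : (∑ a, ∑ b, G1 x a b * nabla (leviCivita G1 Ginv1) g1 (fun _ => u) x a * Z1 x b)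
      = ∑ a, ∑ b, G2 (ψ x) a b
          * nabla (leviCivita G2 Ginv2) g2 (pushVF ψ ψinv (fun _ => u)) (ψ x) a
          * pushVF ψ ψinv Z1 (ψ x) b := by
    have h := hZpair x (nabla (leviCivita G1 Ginv1) g1 (fun _ => u) x)
    rw [hconn_g_U] at h
    exact h
  have hp2 : (∑ a, ∑ b, G1 x a b * nabla (leviCivita G1 Ginv1) (fun _ => u) g1 x a * Z1 x b)
      = ∑ a, ∑ b, G2 (ψ x) a b
          * nabla (leviCivita G2 Ginv2) (pushVF ψ ψinv (fun _ => u)) g2 (ψ x) a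
          * pushVF ψ ψinv Z1 (ψ x) b := by
    have h := hZpair x (nabla (leviCivita G1 Ginv1) (fun _ => u) g1 x)
    rw [hconn_U_g] at h
    exact h
  -- the two star identities
  have s1 := star_id hG1 hGinv1 hpair1 hf1 hU1s hZ1s x
  rw [← hgf1] at s1
  have s2 := star_id hG2 hGinv2 hpair2 hf2 hU2s hZ2s (ψ x)
  rw [← hgf2] at s2
  -- assemble
  rw [hpushSym]
  have hU2at : pushVF ψ ψinv (fun _ : Pt n => u) (ψ x) = fderiv ℝ ψ x u := pushVF_at hli _ x
  rw [← hU2at]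
  linarith [s1, s2, hdir, hp1, hp2]

end IsomAux

/-- If the state space diffeomorphism `ψ` between two externally equivalent gradient
systems (each observable, with constant-rank observation codistribution and full-rank
`S₀`) intertwines the Levi-Civita connections of `G¹` and `G²`, then `ψ` is an isometry:
`ψ*G² = G¹`. -/
theorem state_space_diffeomorphism_isometry {n m : ℕ}
    (G1 Ginv1 G2 Ginv2 : Pt n → Matrix (Fin n) (Fin n) ℝ)
    (hG1 : SmoothMat G1) (hGinv1 : SmoothMat Ginv1) (hpair1 : MetricPair G1 Ginv1)
    (hG2 : SmoothMat G2) (hGinv2 : SmoothMat Ginv2) (hpair2 : MetricPair G2 Ginv2)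
    (gs1 gs2 : Fin (m+1) → VF n) (Vs1 Vs2 : Fin m → (Pt n → ℝ))
    (hgs1 : ∀ i, SmoothVF (gs1 i)) (hVs1 : ∀ j, ContDiff ℝ (⊤ : ℕ∞) (Vs1 j))
    (hgs2 : ∀ i, SmoothVF (gs2 i)) (hVs2 : ∀ j, ContDiff ℝ (⊤ : ℕ∞) (Vs2 j))
    -- `Σ¹`, `Σ²` are gradient systems
    (hgrad1 : ∀ j : Fin m, gs1 j.succ = gradV Ginv1 (Vs1 j))
    (hgrad2 : ∀ j : Fin m, gs2 j.succ = gradV Ginv2 (Vs2 j))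
    (hdrift1 : ∃ U : Pt n → ℝ, ContDiff ℝ (⊤ : ℕ∞) U ∧ gs1 0 = gradV Ginv1 U)
    (hdrift2 : ∃ U : Pt n → ℝ, ContDiff ℝ (⊤ : ℕ∞) U ∧ gs2 0 = gradV Ginv2 U)
    (hobs1 : Observable gs1 Vs1) (hobs2 : Observable gs2 Vs2)
    (hrk1 : ConstantRankObs gs1 Vs1) (hrk2 : ConstantRankObs gs2 Vs2)
    (hS01 : S0FullRank (leviCivita G1 Ginv1) gs1)
    (hS02 : S0FullRank (leviCivita G2 Ginv2) gs2)
    -- `ψ` is a state space diffeomorphism realizing the external equivalence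
    (ψ ψinv : Pt n → Pt n)
    (hψ : ContDiff ℝ (⊤ : ℕ∞) ψ) (hψinv : ContDiff ℝ (⊤ : ℕ∞) ψinv)
    (hli : Function.LeftInverse ψinv ψ) (hri : Function.RightInverse ψinv ψ)
    (hpush : ∀ i x, fderiv ℝ ψ x (gs1 i x) = gs2 i (ψ x))
    (hout : ∀ j, Vs1 j = Vs2 j ∘ ψ)
    -- `ψ` intertwines the Levi-Civita connections
    (hconn : ∀ X Y : VF n, SmoothVF X → SmoothVF Y → ∀ y,
      fderiv ℝ ψ (ψinv y) (nabla (leviCivita G1 Ginv1) X Y (ψinv y))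
        = nabla (leviCivita G2 Ginv2)
            (fun z => fderiv ℝ ψ (ψinv z) (X (ψinv z)))
            (fun z => fderiv ℝ ψ (ψinv z) (Y (ψinv z))) y) :
    -- then `ψ` is an isometry: `ψ*G² = G¹`
    ∀ (x : Pt n) (u v : Fin n → ℝ),
      ∑ a, ∑ b, G2 (ψ x) a b * fderiv ℝ ψ x u a * fderiv ℝ ψ x v b
        = ∑ a, ∑ b, G1 x a b * u a * v b := by
    classical
  have hψd : Differentiable ℝ ψ := hψ.differentiable (by simp)
  have hgrad1' : ∀ i : Fin (m+1), ∃ f, ContDiff ℝ (⊤ : ℕ∞) f ∧ gs1 i = gradV Ginv1 f := by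
    intro i
    refine Fin.cases ?_ (fun j => ⟨Vs1 j, hVs1 j, hgrad1 j⟩) i
    obtain ⟨U0, hU0, hg⟩ := hdrift1
    exact ⟨U0, hU0, hg⟩
  have hgrad2' : ∀ i : Fin (m+1), ∃ f, ContDiff ℝ (⊤ : ℕ∞) f ∧ gs2 i = gradV Ginv2 f := by
    intro i
    refine Fin.cases ?_ (fun j => ⟨Vs2 j, hVs2 j, hgrad2 j⟩) i
    obtain ⟨U0, hU0, hg⟩ := hdrift2
    exact ⟨U0, hU0, hg⟩
  have hPgs : ∀ i, IsomAux.pushVF ψ ψinv (gs1 i) = gs2 i := by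
    intro i
    funext z
    show fderiv ℝ ψ (ψinv z) (gs1 i (ψinv z)) = gs2 i z
    rw [hpush i (ψinv z), hri z]
  -- main induction over words
  have main : ∀ (L : List (Fin (m+1))) (j : Fin m),
      SmoothVF (symProdList (leviCivita G1 Ginv1) (L.map gs1) (gs1 j.succ))
      ∧ ∀ (x : Pt n) (u : Fin n → ℝ),
          (∑ a, ∑ b, G1 x a b * u a
              * symProdList (leviCivita G1 Ginv1) (L.map gs1) (gs1 j.succ) x b)
            = ∑ a, ∑ b, G2 (ψ x) a b * fderiv ℝ ψ x u a
                * IsomAux.pushVF ψ ψinv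
                    (symProdList (leviCivita G1 Ginv1) (L.map gs1) (gs1 j.succ)) (ψ x) b := by
    intro L
    induction L with
    | nil =>
      intro j
      constructor
      · exact hgs1 j.succ
      · intro x u
        show (∑ a, ∑ b, G1 x a b * u a * gs1 j.succ x b)
            = ∑ a, ∑ b, G2 (ψ x) a b * fderiv ℝ ψ x u a
                * IsomAux.pushVF ψ ψinv (gs1 j.succ) (ψ x) b
        rw [IsomAux.pushVF_at hli, hpush j.succ x, hgrad1 j, hgrad2 j]
        rw [IsomAux.pair_grad hpair1 (Vs1 j) x u,
          IsomAux.pair_grad hpair2 (Vs2 j) (ψ x) (fderiv ℝ ψ x u)]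
        rw [hout j]
        exact IsomAux.fderiv_comp_apply ((hVs2 j).differentiable (by simp) (ψ x)) (hψd x) u
    | cons i L ih =>
      intro j
      obtain ⟨hZs, hZpair⟩ := ih j
      obtain ⟨f1, hf1, hgsf1⟩ := hgrad1' i
      obtain ⟨f2, hf2, hgsf2⟩ := hgrad2' i
      constructor
      · exact IsomAux.smooth_symProd (IsomAux.smooth_LC hG1 hGinv1) (hgs1 i) hZs
      · intro x u
        show (∑ a, ∑ b, G1 x a b * u a
            * symProd (leviCivita G1 Ginv1) (gs1 i)
                (symProdList (leviCivita G1 Ginv1) (L.map gs1) (gs1 j.succ)) x b)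
          = ∑ a, ∑ b, G2 (ψ x) a b * fderiv ℝ ψ x u a
              * IsomAux.pushVF ψ ψinv
                  (symProd (leviCivita G1 Ginv1) (gs1 i)
                    (symProdList (leviCivita G1 Ginv1) (L.map gs1) (gs1 j.succ))) (ψ x) b
        exact IsomAux.step_lemma hG1 hGinv1 hpair1 hG2 hGinv2 hpair2 hψ hψinv hli hconn
          (hgs1 i) (hPgs i) hf1 hf2 hgsf1 hgsf2 hZs hZpair x u
  -- conclude via the spanning property of S₀
  intro x u v
  have hv : v ∈ Submodule.span ℝ {w : Fin n → ℝ |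
      ∃ p : List (Fin (m+1)) × Fin m, w = s0Gen (leviCivita G1 Ginv1) gs1 p x} := by
    rw [hS01 x]; trivial
  have hp : (∑ a, ∑ b, G1 x a b * u a * v b)
      = ∑ a, ∑ b, G2 (ψ x) a b * fderiv ℝ ψ x u a * fderiv ℝ ψ x v b := by
    refine Submodule.span_induction (p := fun w _ =>
      (∑ a, ∑ b, G1 x a b * u a * w b)
        = ∑ a, ∑ b, G2 (ψ x) a b * fderiv ℝ ψ x u a * fderiv ℝ ψ x w b)
      ?_ ?_ ?_ ?_ hv
    · rintro w ⟨p, rfl⟩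
      have h := (main p.1 p.2).2 x u
      rw [IsomAux.pushVF_at hli] at h
      exact h
    · simp
    · intro w1 w2 hw1 hw2 h1 h2
      have e : fderiv ℝ ψ x (w1 + w2) = fderiv ℝ ψ x w1 + fderiv ℝ ψ x w2 := map_add _ _ _
      simp only [e, Pi.add_apply, mul_add, Finset.sum_add_distrib]
      linarith
    · intro a w hw h
      have e : fderiv ℝ ψ x (a • w) = a • fderiv ℝ ψ x w := map_smul _ _ _
      have l : (∑ p, ∑ b, G1 x p b * u p * (a • w) b)
          = a * ∑ p, ∑ b, G1 x p b * u p * w b := by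
        rw [Finset.mul_sum]
        refine Finset.sum_congr rfl fun p _ => ?_
        rw [Finset.mul_sum]
        refine Finset.sum_congr rfl fun b _ => ?_
        simp [Pi.smul_apply, smul_eq_mul]; ring
      have r : (∑ p, ∑ b, G2 (ψ x) p b * fderiv ℝ ψ x u p * fderiv ℝ ψ x (a • w) b)
          = a * ∑ p, ∑ b, G2 (ψ x) p b * fderiv ℝ ψ x u p * fderiv ℝ ψ x w b := by
        rw [Finset.mul_sum]
        refine Finset.sum_congr rfl fun p _ => ?_
        rw [Finset.mul_sum]
        refine Finset.sum_congr rfl fun b _ => ?_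
        rw [e]
        simp [Pi.smul_apply, smul_eq_mul]; ring
      rw [l, r, h]
  exact hp.symm
end
end
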